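/- arXiv:1605.05391 — 14 statements merged into one kernel-verified Lean document; each statement's English description precedes it below -/
import Mathlib

section
/- Let n and r be positive integers and let a be an integer with 1 ≤ a ≤ min(n, r). If A is the top-left a×a submatrix of the integer matrix 𝔍_{n,r}, then |det(A)| = 1. -/
/-- The matrix `𝔍_{a,b}` (for positive `a`, `b`): `𝔍_{a,a} = I_a`; if `a < b` then
`𝔍_{a,b} = [𝔍_{a,b-a} | I_a]` (horizontal concatenation); if `a > b` then `𝔍_{a,b}`
is `𝔍_{a-b,b}` stacked on top of `I_b` (vertical concatenation). -/
def Jmat : (a : ℕ) → (b : ℕ) → Matrix (Fin a) (Fin b) ℤ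
  | a, b =>
    if h0 : a = 0 ∨ b = 0 then Matrix.of fun _ _ => 0
    else if hab : a < b then
      Matrix.of fun i j =>
        if h : (j : ℕ) < b - a then Jmat a (b - a) i ⟨(j : ℕ), h⟩
        else if (i : ℕ) = (j : ℕ) - (b - a) then 1 else 0
    else if hba : b < a then
      Matrix.of fun i j =>
        if h : (i : ℕ) < a - b then Jmat (a - b) b ⟨(i : ℕ), h⟩ j
        else if (i : ℕ) - (a - b) = (j : ℕ) then 1 else 0
    else
      Matrix.of fun i j => if (i : ℕ) = (j : ℕ) then 1 else 0
termination_by a b => a + b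
decreasing_by
  · omega
  · omega

/-!
Generalize from the top-left minor to square windows of `𝔍_{n,r}` anchored at the boundary.
For `n ≤ r` we have `𝔍_{n,r} = [𝔍_{n,r-n} | I_n]`, so an anchored window either lies in
`𝔍_{n,r-n}`, is a diagonal window of `I_n`, or straddles both; in the last case its columns
taken from `I_n` are unit vectors, and expanding along them leaves an anchored window of
`𝔍_{n,r-n}`. Since `𝔍_{n,r}ᵀ = 𝔍_{r,n}`, the case `n > r` follows by transposition, and
induction on `n + r` concludes.
-/

open Matrix

theorem Matrix.abs_det_eq_of_submatrix_eq_fromBlocks {ι κ μ R : Type*} [Fintype ι] [DecidableEq ι]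
    [Fintype κ] [DecidableEq κ] [Fintype μ] [DecidableEq μ]
    [CommRing R] [LinearOrder R] [IsStrictOrderedRing R] (M : Matrix ι ι R) (e₁ e₂ : κ ⊕ μ ≃ ι)
    (B : Matrix κ μ R) (D : Matrix μ μ R) (h : M.submatrix e₁ e₂ = fromBlocks 1 B 0 D) :
    |M.det| = |D.det| := by
  rw [← abs_det_submatrix_equiv_equiv e₁ e₂, h, det_fromBlocks_zero₂₁, det_one, one_mul]

namespace Jmat

theorem apply_of_lt {a b : ℕ} (hab : a < b) (i : Fin a) (j : Fin b) :
    Jmat a b i j = if h : (j : ℕ) < b - a then Jmat a (b - a) i ⟨j, h⟩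
      else if (i : ℕ) = j - (b - a) then 1 else 0 := by
  rw [Jmat, dif_neg (by have := i.pos; omega), dif_pos hab]
  rfl

theorem apply_of_gt {a b : ℕ} (hba : b < a) (i : Fin a) (j : Fin b) :
    Jmat a b i j = if h : (i : ℕ) < a - b then Jmat (a - b) b ⟨i, h⟩ j
      else if (i : ℕ) - (a - b) = j then 1 else 0 := by
  rw [Jmat, dif_neg (by have := j.pos; omega), dif_neg (by omega), dif_pos hba]
  rfl

theorem self_eq_one (a : ℕ) : Jmat a a = 1 := by
  ext i j
  rw [Jmat, dif_neg (by have := i.pos; omega), dif_neg (lt_irrefl a), dif_neg (lt_irrefl a),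
    one_apply, of_apply]
  simp only [Fin.val_inj]

theorem transpose_eq (a b : ℕ) : (Jmat a b)ᵀ = Jmat b a := by
  rcases lt_trichotomy a b with hab | rfl | hba
  · ext i j
    have := j.pos
    rw [transpose_apply, apply_of_lt hab, apply_of_gt hab, ← transpose_eq a (b - a)]
    simp only [transpose_apply, eq_comm]
  · rw [self_eq_one, transpose_one]
  · ext i j
    have := i.pos
    rw [transpose_apply, apply_of_gt hba, apply_of_lt hba, ← transpose_eq (a - b) b]
    simp only [transpose_apply, eq_comm]
termination_by a + b
decreasing_by all_goals omega

/-- The entries of `𝔍_{n,r}`, extended by zero outside the matrix so that windows need no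
bound proofs. -/
def entry (n r i j : ℕ) : ℤ :=
  if h : i < n ∧ j < r then Jmat n r ⟨i, h.1⟩ ⟨j, h.2⟩ else 0

variable {n r : ℕ}

theorem entry_eq_zero_of_le {i j : ℕ} (hj : r ≤ j) : entry n r i j = 0 :=
  dif_neg (by omega)

theorem entry_swap (n r i j : ℕ) : entry r n j i = entry n r i j := by
  unfold entry
  rw [← transpose_eq n r]
  simp only [transpose_apply, and_comm]

theorem entry_of_le (h : n ≤ r) (i j : ℕ) :
    entry n r i j = entry n (r - n) i j + if i < n ∧ i + (r - n) = j then 1 else 0 := by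
  rcases h.lt_or_eq with hlt | rfl
  · unfold entry
    by_cases hij : i < n ∧ j < r
    · rw [dif_pos hij, apply_of_lt hlt]
      split_ifs <;> simp_all <;> omega
    · rw [dif_neg hij, dif_neg (by omega), if_neg (by omega), add_zero]
  · rw [Nat.sub_self, entry_eq_zero_of_le j.zero_le, zero_add]
    unfold entry
    split_ifs <;> simp_all [self_eq_one, one_apply, Fin.ext_iff]
    omega

def window (n r s t m : ℕ) : Matrix (Fin m) (Fin m) ℤ :=
  of fun i j => entry n r (s + i) (t + j)

theorem window_transpose (n r s t m : ℕ) : (window n r s t m)ᵀ = window r n t s m := by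
  ext i j
  exact (entry_swap n r _ _).symm

/-- The windows are the squares in the top-left or bottom-right corner and those spanning all
rows or all columns: exactly the class that is closed under the recursion of `Jmat`. -/
def AnchoredMinorsUnimodular (n r : ℕ) : Prop :=
  ∀ s t m, s + m ≤ n → t + m ≤ r → (s = 0 ∨ t + m = r) → (t = 0 ∨ s + m = n) →
    |(window n r s t m).det| = 1

theorem AnchoredMinorsUnimodular.swap (h : AnchoredMinorsUnimodular n r) :
    AnchoredMinorsUnimodular r n := by
  intro s t m hs ht h₁ h₂
  rw [← window_transpose, det_transpose]
  exact h t s m ht hs h₂ h₁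

theorem AnchoredMinorsUnimodular.of_sub (hnr : n ≤ r) (h : AnchoredMinorsUnimodular n (r - n)) :
    AnchoredMinorsUnimodular n r := by
  intro s t m hs ht h₁ h₂
  by_cases hleft : t + m ≤ r - n
  · have : window n r s t m = window n (r - n) s t m := by
      ext i j
      simp only [window, of_apply, entry_of_le hnr]
      rw [if_neg (by omega), add_zero]
    rw [this]
    exact h s t m hs hleft (Or.inl (by omega)) h₂
  by_cases hright : r - n ≤ t
  · have : window n r s t m = 1 := by
      ext i j
      simp only [window, of_apply, entry_of_le hnr, entry_eq_zero_of_le (show r - n ≤ t + j by omega),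
        one_apply, Fin.ext_iff]
      split_ifs <;> omega
    rw [this, det_one, abs_one]
  -- The window straddles `[𝔍_{n,r-n} | I_n]`: its last `c₂` columns are unit vectors, and
  -- expanding along them leaves an anchored window of `𝔍_{n,r-n}`.
  obtain rfl : s = 0 := by omega
  obtain ⟨c₁, hc₁⟩ : ∃ c, c = r - n - t := ⟨_, rfl⟩
  obtain ⟨c₂, hc₂⟩ : ∃ c, c = t + m - (r - n) := ⟨_, rfl⟩
  let e₁ : Fin c₂ ⊕ Fin c₁ ≃ Fin m := finSumFinEquiv.trans (finCongr (by omega))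
  let e₂ : Fin c₂ ⊕ Fin c₁ ≃ Fin m :=
    (Equiv.sumComm _ _).trans (finSumFinEquiv.trans (finCongr (by omega)))
  have key : (window n r 0 t m).submatrix e₁ e₂ =
      fromBlocks 1 (of fun (i : Fin c₂) (k : Fin c₁) => entry n r i (t + k)) 0
        (window n (r - n) c₂ t c₁) := by
    ext (i | i) (k | k) <;>
      simp (disch := omega) [e₁, e₂, window, entry_of_le hnr, entry_eq_zero_of_le, one_apply,
        Fin.ext_iff] <;> grind
  rw [abs_det_eq_of_submatrix_eq_fromBlocks _ e₁ e₂ _ _ key]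
  exact h c₂ t c₁ (by omega) (by omega) (Or.inr (by omega)) (by omega)

theorem anchoredMinorsUnimodular_zero_left (r : ℕ) : AnchoredMinorsUnimodular 0 r := by
  intro s t m hs _ _ _
  obtain rfl : m = 0 := by omega
  simp

theorem anchoredMinorsUnimodular (n r : ℕ) : AnchoredMinorsUnimodular n r := by
  rcases Nat.eq_zero_or_pos n with rfl | hn
  · exact anchoredMinorsUnimodular_zero_left r
  rcases Nat.eq_zero_or_pos r with rfl | hr
  · exact (anchoredMinorsUnimodular_zero_left n).swap
  rcases le_total n r with h | h
  · exact .of_sub h (anchoredMinorsUnimodular n (r - n))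
  · exact (AnchoredMinorsUnimodular.of_sub h (anchoredMinorsUnimodular r (n - r))).swap
termination_by n + r

end Jmat

theorem abs_det_topLeft_submatrix_Jmat_general (n r a : ℕ) (han : a ≤ n) (har : a ≤ r) :
    |(Matrix.of fun i j : Fin a =>
        Jmat n r ⟨(i : ℕ), lt_of_lt_of_le i.isLt han⟩
          ⟨(j : ℕ), lt_of_lt_of_le j.isLt har⟩).det| = 1 := by
  convert Jmat.anchoredMinorsUnimodular n r 0 0 a (by omega) (by omega) (.inl rfl) (.inl rfl)
    using 3
  ext i j
  simp only [Jmat.window, Jmat.entry, of_apply, zero_add]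
  rw [dif_pos ⟨by omega, by omega⟩]

/-- If `A` is the top-left `a × a` submatrix of `𝔍_{n,r}` with `1 ≤ a ≤ min n r`,
then `|det A| = 1`. -/
theorem abs_det_topLeft_submatrix_Jmat (n r a : ℕ) (hn : 0 < n) (hr : 0 < r)
    (ha : 1 ≤ a) (han : a ≤ n) (har : a ≤ r) :
    |(Matrix.of fun i j : Fin a =>
        Jmat n r ⟨(i : ℕ), lt_of_lt_of_le i.isLt han⟩
          ⟨(j : ℕ), lt_of_lt_of_le j.isLt har⟩).det| = 1 :=
  abs_det_topLeft_submatrix_Jmat_general n r a han har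
end

section
/- Let n > r > 0 be integers and let a be an integer with 0 ≤ a ≤ n. Then the r×r integer matrix formed by the r consecutive rows a+1, a+2, …, a+r of 𝔐_{n,r} has determinant equal to 1 or −1. -/
/-- The `(n+r) × r` matrix `𝔐_{n,r}`, obtained by stacking `I_r` on top of `𝔍_{n,r}`.
Rows are indexed by `Fin (r + n)` (row `i` of `𝔐_{n,r}` in 1-indexed notation is the
row with index `i - 1` here). -/
def Mmat (n r : ℕ) : Matrix (Fin (r + n)) (Fin r) ℤ :=
  Matrix.of fun i j =>
    if h : (i : ℕ) < r then (if (i : ℕ) = (j : ℕ) then 1 else 0)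
    else Jmat n r ⟨(i : ℕ) - r, by have := i.isLt; omega⟩ j

lemma Jmat_lt {a b : ℕ} (ha : 0 < a) (hab : a < b) (i : Fin a) (j : Fin b) :
    Jmat a b i j = if h : (j : ℕ) < b - a then Jmat a (b - a) i ⟨(j : ℕ), h⟩
      else if (i : ℕ) = (j : ℕ) - (b - a) then 1 else 0 := by
  rw [Jmat]; rw [dif_neg (by omega), dif_pos hab]; rfl

lemma Jmat_gt_lt {a b : ℕ} (hb : 0 < b) (hba : b < a) (i : Fin a) (j : Fin b)
    (h : (i : ℕ) < a - b) : Jmat a b i j = Jmat (a - b) b ⟨(i : ℕ), h⟩ j := by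
  rw [Jmat]; rw [dif_neg (by omega), dif_neg (by omega), dif_pos hba]
  simp only [Matrix.of_apply]; rw [dif_pos h]

lemma Jmat_gt_ge {a b : ℕ} (hb : 0 < b) (hba : b < a) (i : Fin a) (j : Fin b)
    (h : a - b ≤ (i : ℕ)) : Jmat a b i j = if (i : ℕ) - (a - b) = (j : ℕ) then 1 else 0 := by
  rw [Jmat]; rw [dif_neg (by omega), dif_neg (by omega), dif_pos hba]
  simp only [Matrix.of_apply]; rw [dif_neg (by omega)]

lemma Jmat_eq {a : ℕ} (ha : 0 < a) (i j : Fin a) :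
    Jmat a a i j = if (i : ℕ) = (j : ℕ) then 1 else 0 := by
  rw [Jmat]; rw [dif_neg (by omega), dif_neg (by omega), dif_neg (by omega)]; rfl

/-- rows of `Mmat`, extended by cyclically repeating unit vectors. -/
def urow (n r k : ℕ) : Fin r → ℤ :=
  if h : k < r + n then fun j => Mmat n r ⟨k, h⟩ j
  else fun j => if (j : ℕ) = (k - n) % r then 1 else 0

lemma urow_lt {n r k : ℕ} (hk : k < r) (j : Fin r) :
    urow n r k j = if (j : ℕ) = k then 1 else 0 := by
  unfold urow
  rw [dif_pos (by omega)]
  simp only [Mmat, Matrix.of_apply]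
  rw [dif_pos (by simpa using hk)]
  simp [eq_comm]

lemma urow_big {n r k : ℕ} (hk : r + n ≤ k) (j : Fin r) :
    urow n r k j = if (j : ℕ) = (k - n) % r then 1 else 0 := by
  unfold urow; rw [dif_neg (by omega)]

lemma urow_J {n r k : ℕ} (hk1 : r ≤ k) (hk2 : k < r + n) (j : Fin r) :
    urow n r k j = Jmat n r ⟨k - r, by omega⟩ j := by
  unfold urow
  rw [dif_pos hk2]
  simp only [Mmat, Matrix.of_apply]
  rw [dif_neg (by simpa using not_lt.2 hk1)]

lemma urow_mid {n r k : ℕ} (hn : 0 < n) (hnr : n < r) (hk1 : r ≤ k) (hk2 : k < r + n)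
    (j : Fin r) :
    urow n r k j = if h : (j : ℕ) < r - n then urow n (r - n) (k - n) ⟨(j : ℕ), h⟩
      else if (j : ℕ) = k - n then 1 else 0 := by
  rw [urow_J hk1 hk2, Jmat_lt hn (by omega)]
  by_cases h : (j : ℕ) < r - n
  · rw [dif_pos h, dif_pos h]
    rw [urow_J (by omega) (by omega)]
    simp only [show k - n - (r - n) = k - r from by omega]
  · rw [dif_neg h, dif_neg h]
    congr 1
    simp only [eq_iff_iff]
    omega

lemma urow_ge_n {n r k : ℕ} (hr : 0 < r) (hrn : r ≤ n) (hk : n ≤ k) (j : Fin r) :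
    urow n r k j = if (j : ℕ) = (k - n) % r then 1 else 0 := by
  by_cases hbig : r + n ≤ k
  · exact urow_big hbig j
  · rw [urow_J (by omega) (by omega)]
    rcases eq_or_lt_of_le hrn with h | h
    · subst h
      rw [Jmat_eq hr, Nat.mod_eq_of_lt (show k - r < r by omega)]
      congr 1
      simp only [eq_iff_iff]
      omega
    · rw [Jmat_gt_ge hr h _ _ (by simp; omega), Nat.mod_eq_of_lt (show k - n < r by omega)]
      congr 1
      simp only [eq_iff_iff, Fin.val_mk]
      omega

lemma urow_gt {n r : ℕ} (hr : 0 < r) (hrn : r < n) (k : ℕ) :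
    urow n r k = urow (n - r) r k := by
  funext j
  by_cases h1 : k < r
  · rw [urow_lt h1, urow_lt h1]
  · by_cases h2 : k < n
    · rw [urow_J (by omega) (by omega), urow_J (n := n - r) (by omega) (by omega)]
      rw [Jmat_gt_lt hr hrn _ _ (by simp; omega)]
    · rw [urow_ge_n hr (by omega) (by omega)]
      by_cases h3 : r + (n - r) ≤ k
      · rw [urow_big h3]
        congr 1
        simp only [eq_iff_iff]
        have : (k - (n - r)) % r = (k - n) % r := by
          have hh : k - (n - r) = (k - n) + r := by omega
          rw [hh, Nat.add_mod_right]
        omega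
      · omega

lemma urow_eq_diag {r k : ℕ} (hr : 0 < r) (j : Fin r) :
    urow r r k j = if (j : ℕ) = k % r then 1 else 0 := by
  by_cases h1 : k < r
  · rw [urow_lt h1, Nat.mod_eq_of_lt h1]
  · rw [urow_ge_n hr le_rfl (by omega)]
    congr 1; simp only [eq_iff_iff]
    have : (k - r) % r = k % r := by
      have hh : k = (k - r) + r := by omega
      conv_rhs => rw [hh]
      rw [Nat.add_mod_right]
    omega

/-- the window matrix: rows `a, a+1, ..., a+r-1` of the extended sequence. -/
def Wmat (n r a : ℕ) : Matrix (Fin r) (Fin r) ℤ :=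
  Matrix.of fun t j => urow n r (a + (t : ℕ)) j

lemma isUnit_det_cyc {r : ℕ} (hr : 0 < r) (b : ℕ) :
    IsUnit (Matrix.of fun t j : Fin r => if (j : ℕ) = (b + (t : ℕ)) % r then (1 : ℤ) else 0).det := by
  haveI : NeZero r := ⟨by omega⟩
  set π : Equiv.Perm (Fin r) := Equiv.addRight (⟨b % r, Nat.mod_lt _ hr⟩ : Fin r) with hπ
  have hmat : (Matrix.of fun t j : Fin r => if (j : ℕ) = (b + (t : ℕ)) % r then (1 : ℤ) else 0)
      = (π.toPEquiv).toMatrix := by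
    ext t j
    rw [PEquiv.toMatrix_apply]
    simp only [Matrix.of_apply, Equiv.toPEquiv_apply, Option.mem_def, Option.some.injEq]
    have hval : ((π t : Fin r) : ℕ) = (b + (t : ℕ)) % r := by
      simp only [hπ, Equiv.coe_addRight]
      rw [Fin.val_add]
      simp only [Fin.val_mk]
      rw [Nat.add_mod b (t : ℕ) r, Nat.mod_eq_of_lt t.isLt, Nat.add_comm]
    by_cases h : π t = j
    · rw [if_pos h, if_pos (by rw [← h, hval])]
    · rw [if_neg h, if_neg (by intro hj; exact h (Fin.ext (by rw [hval, ← hj])))]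
  rw [hmat, Matrix.det_permutation]
  exact (Equiv.Perm.sign π).isUnit

/-- column split equivalence. -/
def colEquiv (n r : ℕ) (hnr : n < r) : Fin r ≃ (Fin (r - n) ⊕ Fin n) where
  toFun j := if h2 : (j : ℕ) < r - n then Sum.inl ⟨(j : ℕ), h2⟩
    else Sum.inr ⟨(j : ℕ) - (r - n), by have := j.isLt; omega⟩
  invFun s :=
    match s with
    | Sum.inl x => ⟨(x : ℕ), by have := x.isLt; omega⟩
    | Sum.inr y => ⟨(r - n) + (y : ℕ), by have := y.isLt; omega⟩
  left_inv j := by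
    have := j.isLt
    dsimp only
    by_cases h2 : (j : ℕ) < r - n
    · rw [dif_pos h2]
    · rw [dif_neg h2]
      apply Fin.ext
      (try dsimp only)
      omega
  right_inv s := by
    rcases s with x | y
    · have := x.isLt
      dsimp only
      rw [dif_pos (by (try dsimp only); omega)]
    · have := y.isLt
      dsimp only
      rw [dif_neg (by (try dsimp only); omega)]
      simp only [Sum.inr.injEq]
      apply Fin.ext
      (try dsimp only)
      omega

set_option maxHeartbeats 2000000 in
/-- row classification equivalence. -/
def rowEquiv (n r a : ℕ) (hn : 0 < n) (hnr : n < r) (ha : a < n + r) :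
    Fin r ≃ (Fin (r - n) ⊕ Fin n) where
  toFun t :=
    if h1 : a + (t : ℕ) < r - n then Sum.inl ⟨a + (t : ℕ) - min a r, by have := t.isLt; omega⟩
    else if h2 : a + (t : ℕ) < r then Sum.inr ⟨a + (t : ℕ) - (r - n), by have := t.isLt; omega⟩
    else if h3 : a + (t : ℕ) < n + r then
      (if h4 : a + n ≤ a + (t : ℕ) then
        Sum.inl ⟨a + (t : ℕ) - n - min a r, by have := t.isLt; omega⟩
       else Sum.inr ⟨a + (t : ℕ) - n - (r - n), by have := t.isLt; omega⟩)
    else if h5 : a + (t : ℕ) < 2 * r then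
      Sum.inl ⟨a + (t : ℕ) - n - min a r, by have := t.isLt; omega⟩
    else Sum.inr ⟨a + (t : ℕ) - 2 * r, by have := t.isLt; omega⟩
  invFun s :=
    match s with
    | Sum.inl x =>
      if h : min a r + (x : ℕ) < r - n then ⟨min a r + (x : ℕ) - a, by have := x.isLt; omega⟩
      else ⟨min a r + (x : ℕ) + n - a, by have := x.isLt; omega⟩
    | Sum.inr y =>
      if h1 : a ≤ (r - n) + (y : ℕ) then ⟨(r - n) + (y : ℕ) - a, by have := y.isLt; omega⟩
      else if h2 : a ≤ (r - n) + (y : ℕ) + n then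
        ⟨(r - n) + (y : ℕ) + n - a, by have := y.isLt; omega⟩
      else ⟨(r - n) + (y : ℕ) + n + r - a, by have := y.isLt; omega⟩
  left_inv t := by
    have ht := t.isLt
    dsimp only
    by_cases h1 : a + (t : ℕ) < r - n
    · rw [dif_pos h1]
      (try dsimp only)
      split_ifs <;> (apply Fin.ext; (try dsimp only); omega)
    · rw [dif_neg h1]
      by_cases h2 : a + (t : ℕ) < r
      · rw [dif_pos h2]
        (try dsimp only)
        split_ifs <;> (apply Fin.ext; (try dsimp only); omega)
      · rw [dif_neg h2]
        by_cases h3 : a + (t : ℕ) < n + r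
        · rw [dif_pos h3]
          by_cases h4 : a + n ≤ a + (t : ℕ)
          · rw [dif_pos h4]
            (try dsimp only)
            split_ifs <;> (apply Fin.ext; (try dsimp only); omega)
          · rw [dif_neg h4]
            (try dsimp only)
            split_ifs <;> (apply Fin.ext; (try dsimp only); omega)
        · rw [dif_neg h3]
          by_cases h5 : a + (t : ℕ) < 2 * r
          · rw [dif_pos h5]
            (try dsimp only)
            split_ifs <;> (apply Fin.ext; (try dsimp only); omega)
          · rw [dif_neg h5]
            (try dsimp only)
            split_ifs <;> (apply Fin.ext; (try dsimp only); omega)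
  right_inv s := by
    rcases s with x | y
    · have hx := x.isLt
      dsimp only
      by_cases h : min a r + (x : ℕ) < r - n
      · rw [dif_pos h]
        (try dsimp only)
        split_ifs <;>
          first
          | (exfalso; omega)
          | (simp only [Sum.inl.injEq, Sum.inr.injEq]; apply Fin.ext; (try dsimp only); omega)
      · rw [dif_neg h]
        (try dsimp only)
        split_ifs <;>
          first
          | (exfalso; omega)
          | (simp only [Sum.inl.injEq, Sum.inr.injEq]; apply Fin.ext; (try dsimp only); omega)
    · have hy := y.isLt
      dsimp only
      by_cases h1 : a ≤ (r - n) + (y : ℕ)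
      · rw [dif_pos h1]
        (try dsimp only)
        split_ifs <;>
          first
          | (exfalso; omega)
          | (simp only [Sum.inl.injEq, Sum.inr.injEq]; apply Fin.ext; (try dsimp only); omega)
      · rw [dif_neg h1]
        by_cases h2 : a ≤ (r - n) + (y : ℕ) + n
        · rw [dif_pos h2]
          (try dsimp only)
          split_ifs <;>
          first
          | (exfalso; omega)
          | (simp only [Sum.inl.injEq, Sum.inr.injEq]; apply Fin.ext; (try dsimp only); omega)
        · rw [dif_neg h2]
          (try dsimp only)
          split_ifs <;>
          first
          | (exfalso; omega)
          | (simp only [Sum.inl.injEq, Sum.inr.injEq]; apply Fin.ext; (try dsimp only); omega)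

def Cmat (n r a : ℕ) : Matrix (Fin n) (Fin (r - n)) ℤ :=
  Matrix.of fun c j =>
    if (r - n) + (c : ℕ) < a ∧ a ≤ (r - n) + (c : ℕ) + n then
      urow n (r - n) ((r - n) + (c : ℕ)) j else 0

def Xmat (n r a : ℕ) : Matrix (Fin (r - n) ⊕ Fin n) (Fin (r - n) ⊕ Fin n) ℤ :=
  Matrix.fromBlocks (Wmat n (r - n) (min a r)) 0 (Cmat n r a) 1

def Emat (n r a : ℕ) : Matrix (Fin r) (Fin r) ℤ :=
  1 + Matrix.of (fun t s : Fin r =>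
    if r ≤ a + (t : ℕ) ∧ a + (t : ℕ) < n + r ∧ (s : ℕ) + n = (t : ℕ) then 1 else 0)

lemma det_Emat {n r a : ℕ} (hn : 0 < n) : (Emat n r a).det = 1 := by
  have htri : (Emat n r a).BlockTriangular OrderDual.toDual := by
    intro i j hij
    have hij' : (i : ℕ) < (j : ℕ) := hij
    simp only [Emat, Matrix.add_apply, Matrix.of_apply]
    rw [Matrix.one_apply_ne (by intro hh; subst hh; omega), if_neg (by omega)]
    norm_num
  rw [Matrix.det_of_lowerTriangular _ htri]
  apply Finset.prod_eq_one
  intro t _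
  simp only [Emat, Matrix.add_apply, Matrix.of_apply]
  rw [Matrix.one_apply_eq, if_neg (by omega)]
  norm_num

lemma Emat_mul_apply {n r a : ℕ} (Y : Matrix (Fin r) (Fin r) ℤ) (t j : Fin r) :
    (Emat n r a * Y) t j = Y t j +
      (if r ≤ a + (t : ℕ) ∧ a + (t : ℕ) < n + r ∧ n ≤ (t : ℕ) then
        Y ⟨(t : ℕ) - n, Nat.lt_of_le_of_lt (Nat.sub_le _ _) t.isLt⟩ j else 0) := by
  rw [Emat, Matrix.add_mul, Matrix.one_mul, Matrix.add_apply]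
  congr 1
  rw [Matrix.mul_apply]
  by_cases hc : r ≤ a + (t : ℕ) ∧ a + (t : ℕ) < n + r ∧ n ≤ (t : ℕ)
  · rw [if_pos hc]
    rw [Finset.sum_congr rfl
      (g := fun s => if s = (⟨(t : ℕ) - n, Nat.lt_of_le_of_lt (Nat.sub_le _ _) t.isLt⟩ : Fin r)
        then Y s j else 0) ?_]
    · rw [Finset.sum_ite_eq' Finset.univ, if_pos (Finset.mem_univ _)]
    · intro s _
      simp only [Matrix.of_apply]
      by_cases hs : (s : ℕ) + n = (t : ℕ)
      · rw [if_pos ⟨hc.1, hc.2.1, hs⟩, if_pos (Fin.ext (by simp only [Fin.val_mk]; omega)), one_mul]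
      · rw [if_neg (by tauto), if_neg ?_, zero_mul]
        intro hh
        subst hh
        simp only [Fin.val_mk] at hs
        omega
  · rw [if_neg hc]
    apply Finset.sum_eq_zero
    intro s _
    simp only [Matrix.of_apply]
    rw [if_neg (by intro hh; exact hc ⟨hh.1, hh.2.1, by omega⟩), zero_mul]

set_option maxHeartbeats 2000000 in
lemma key_entry {n r a : ℕ} (hn : 0 < n) (hnr : n < r) (ha : a < n + r) (t j : Fin r) :
    Wmat n r a t j =
      ((Xmat n r a).submatrix (rowEquiv n r a hn hnr ha) (colEquiv n r hnr)) t j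
      + (if r ≤ a + (t : ℕ) ∧ a + (t : ℕ) < n + r ∧ n ≤ (t : ℕ) then
          ((Xmat n r a).submatrix (rowEquiv n r a hn hnr ha) (colEquiv n r hnr))
            ⟨(t : ℕ) - n, Nat.lt_of_le_of_lt (Nat.sub_le _ _) t.isLt⟩ j
        else 0) := by
  have ht := t.isLt
  have hjr := j.isLt
  simp only [Matrix.submatrix_apply, Wmat, Matrix.of_apply, rowEquiv, colEquiv,
    Equiv.coe_fn_mk, Xmat]
  by_cases h1 : a + (t : ℕ) < r - n
  · rw [if_neg (by omega), add_zero, dif_pos h1]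
    by_cases hj1 : (j : ℕ) < r - n
    · rw [dif_pos hj1, Matrix.fromBlocks_apply₁₁]
      simp only [Matrix.of_apply]
      (try dsimp only)
      rw [show min a r + (a + (t : ℕ) - min a r) = a + (t : ℕ) from by omega]
      rw [urow_lt (by omega), urow_lt h1]
    · rw [dif_neg hj1, Matrix.fromBlocks_apply₁₂]
      rw [urow_lt (by omega), Matrix.zero_apply]
      rw [if_neg (by omega)]
  · rw [dif_neg h1]
    by_cases h2 : a + (t : ℕ) < r
    · rw [if_neg (by omega), add_zero, dif_pos h2]
      by_cases hj1 : (j : ℕ) < r - n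
      · rw [dif_pos hj1, Matrix.fromBlocks_apply₂₁]
        simp only [Cmat, Matrix.of_apply]
        (try dsimp only)
        rw [if_neg (by omega)]
        rw [urow_lt h2, if_neg (by omega)]
      · rw [dif_neg hj1, Matrix.fromBlocks_apply₂₂]
        rw [urow_lt h2, Matrix.one_apply]
        simp only [Fin.mk.injEq]
        congr 1
        simp only [eq_iff_iff]
        omega
    · rw [dif_neg h2]
      by_cases h3 : a + (t : ℕ) < n + r
      · rw [dif_pos h3]
        by_cases h4 : a + n ≤ a + (t : ℕ)
        · rw [dif_pos h4, if_pos ⟨by omega, h3, by omega⟩]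
          (try dsimp only)
          rw [dif_neg (show ¬ a + ((t : ℕ) - n) < r - n from by omega),
            dif_pos (show a + ((t : ℕ) - n) < r from by omega)]
          rw [urow_mid hn hnr (by omega) (by omega)]
          by_cases hj1 : (j : ℕ) < r - n
          · rw [dif_pos hj1, dif_pos hj1, Matrix.fromBlocks_apply₁₁,
              Matrix.fromBlocks_apply₂₁]
            simp only [Cmat, Matrix.of_apply]
            (try dsimp only)
            rw [if_neg (by omega), add_zero]
            rw [show min a r + (a + (t : ℕ) - n - min a r) = a + (t : ℕ) - n from by omega]
          · rw [dif_neg hj1, dif_neg hj1, Matrix.fromBlocks_apply₁₂,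
              Matrix.fromBlocks_apply₂₂]
            rw [Matrix.zero_apply, zero_add, Matrix.one_apply]
            simp only [Fin.mk.injEq]
            congr 1
            simp only [eq_iff_iff]
            omega
        · rw [dif_neg h4, if_neg (by omega), add_zero]
          rw [urow_mid hn hnr (by omega) (by omega)]
          by_cases hj1 : (j : ℕ) < r - n
          · rw [dif_pos hj1, dif_pos hj1, Matrix.fromBlocks_apply₂₁]
            simp only [Cmat, Matrix.of_apply]
            (try dsimp only)
            rw [if_pos ⟨by omega, by omega⟩]
            rw [show r - n + (a + (t : ℕ) - n - (r - n)) = a + (t : ℕ) - n from by omega]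
          · rw [dif_neg hj1, dif_neg hj1, Matrix.fromBlocks_apply₂₂, Matrix.one_apply]
            simp only [Fin.mk.injEq]
            congr 1
            simp only [eq_iff_iff]
            omega
      · rw [dif_neg h3, if_neg (by omega), add_zero]
        have hmod : (a + (t : ℕ) - n) % r = a + (t : ℕ) - n - r := by
          conv_lhs => rw [show a + (t : ℕ) - n = (a + (t : ℕ) - n - r) + r from by omega]
          rw [Nat.add_mod_right, Nat.mod_eq_of_lt (by omega)]
        by_cases h5 : a + (t : ℕ) < 2 * r
        · rw [dif_pos h5]
          rw [urow_big (by omega), hmod]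
          by_cases hj1 : (j : ℕ) < r - n
          · rw [dif_pos hj1, Matrix.fromBlocks_apply₁₁]
            simp only [Matrix.of_apply]
            (try dsimp only)
            rw [show min a r + (a + (t : ℕ) - n - min a r) = a + (t : ℕ) - n from by omega]
            rw [urow_big (by omega)]
            rw [show (a + (t : ℕ) - n - n) % (r - n) = a + (t : ℕ) - n - r from by
              rw [show a + (t : ℕ) - n - n = (a + (t : ℕ) - n - r) + (r - n) from by omega,
                Nat.add_mod_right, Nat.mod_eq_of_lt (by omega)]]
          · rw [dif_neg hj1, Matrix.fromBlocks_apply₁₂, Matrix.zero_apply]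
            rw [if_neg (by omega)]
        · rw [dif_neg h5]
          rw [urow_big (by omega), hmod]
          by_cases hj1 : (j : ℕ) < r - n
          · rw [dif_pos hj1, Matrix.fromBlocks_apply₂₁]
            simp only [Cmat, Matrix.of_apply]
            (try dsimp only)
            rw [if_neg (by omega)]
            rw [if_neg (by omega)]
          · rw [dif_neg hj1, Matrix.fromBlocks_apply₂₂, Matrix.one_apply]
            simp only [Fin.mk.injEq]
            congr 1
            simp only [eq_iff_iff]
            omega

lemma key_eq {n r a : ℕ} (hn : 0 < n) (hnr : n < r) (ha : a < n + r) :
    Wmat n r a = Emat n r a *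
      ((Xmat n r a).submatrix (rowEquiv n r a hn hnr ha) (colEquiv n r hnr)) := by
  ext t j
  rw [Emat_mul_apply, key_entry hn hnr ha]

lemma isUnit_det_step {n r a : ℕ} (hn : 0 < n) (hnr : n < r) (ha : a < n + r)
    (IH : IsUnit (Wmat n (r - n) (min a r)).det) : IsUnit (Wmat n r a).det := by
  rw [key_eq hn hnr ha, Matrix.det_mul, det_Emat hn, one_mul]
  have hsub : (Xmat n r a).submatrix (rowEquiv n r a hn hnr ha) (colEquiv n r hnr)
      = ((Xmat n r a).submatrix (colEquiv n r hnr) (colEquiv n r hnr)).submatrix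
          (((rowEquiv n r a hn hnr ha).trans (colEquiv n r hnr).symm)) id := by
    ext t j
    simp only [Matrix.submatrix_apply, Equiv.trans_apply, Equiv.apply_symm_apply, id_eq]
  rw [hsub, Matrix.det_permute, Matrix.det_submatrix_equiv_self]
  apply IsUnit.mul
  · exact (Equiv.Perm.sign _).isUnit
  · rw [Xmat, Matrix.det_fromBlocks_zero₁₂, Matrix.det_one, mul_one]
    exact IH

lemma isUnit_det_Wmat : ∀ N n r a : ℕ, 0 < n → 0 < r → n + r ≤ N →
    IsUnit ((Wmat n r a).det) := by
  intro N
  induction N with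
  | zero => intro n r a hn hr h; omega
  | succ N IH =>
    intro n r a hn hr hle
    rcases lt_trichotomy r n with h | h | h
    · have hW : Wmat n r a = Wmat (n - r) r a := by
        ext t j
        simp only [Wmat, Matrix.of_apply]
        rw [urow_gt hr h]
      rw [hW]
      exact IH (n - r) r a (by omega) hr (by omega)
    · subst h
      have hW : Wmat r r a
          = Matrix.of fun t j : Fin r => if (j : ℕ) = (a + (t : ℕ)) % r then (1 : ℤ) else 0 := by
        ext t j
        simp only [Wmat, Matrix.of_apply]
        rw [urow_eq_diag hr]
      rw [hW]
      exact isUnit_det_cyc hr a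
    · by_cases ha : a < n + r
      · exact isUnit_det_step hn h ha (IH n (r - n) (min a r) hn (by omega) (by omega))
      · have hW : Wmat n r a = Matrix.of fun t j : Fin r =>
            if (j : ℕ) = ((a - n) + (t : ℕ)) % r then (1 : ℤ) else 0 := by
          ext t j
          simp only [Wmat, Matrix.of_apply]
          rw [urow_big (by omega), show a + (t : ℕ) - n = (a - n) + (t : ℕ) from by omega]
        rw [hW]
        exact isUnit_det_cyc hr (a - n)

/-- For `n > r > 0` and `0 ≤ a ≤ n`, the `r × r` matrix formed by the `r` consecutive
rows `a+1, a+2, …, a+r` of `𝔐_{n,r}` has determinant `1` or `-1`. -/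
theorem det_consecutive_rows_Mmat (n r : ℕ) (hr : 0 < r) (hrn : r < n)
    (a : ℕ) (ha : a ≤ n) :
    (Matrix.of fun i j : Fin r =>
        Mmat n r ⟨a + (i : ℕ), by have := i.isLt; omega⟩ j).det = 1 ∨
    (Matrix.of fun i j : Fin r =>
        Mmat n r ⟨a + (i : ℕ), by have := i.isLt; omega⟩ j).det = -1 := by
  have hW : (Matrix.of fun i j : Fin r =>
      Mmat n r ⟨a + (i : ℕ), by have := i.isLt; omega⟩ j) = Wmat n r a := by
    ext i j
    simp only [Wmat, Matrix.of_apply, urow]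
    rw [dif_pos (by have := i.isLt; omega)]
  rw [hW]
  exact Int.isUnit_iff.mp (isUnit_det_Wmat (n + r) n r a (by omega) hr le_rfl)
end

section
/- Let R be a finite set of positive integers with r = max(R), let n ≥ r be an integer, and suppose n is not a multiple of gcd(R). Then for every integer s ≥ 2, the clock network N_n(R) is not s-solvable. -/
/-- The clock network `N_n(R)` (with `r = max R`) is `s`-solvable: there is a circuit,
given by a function `f k` for each non-input node (node `k` receives the values at
nodes `k - j` for `j ∈ R`), such that for every input `c ∈ (ℤ_s)^r` the valuation `X`
(determined by `X i = c i` for the `r` input nodes and by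
`X k = f k (fun j => X (k - j))` for the remaining nodes, all 0-indexed) satisfies
`X (n + i) = c i` at the `r` output nodes. -/
def Solvable (R : Finset ℕ) (r n s : ℕ) : Prop :=
  ∃ f : ℕ → ({ j // j ∈ R } → ZMod s) → ZMod s,
    ∀ c : Fin r → ZMod s, ∀ X : ℕ → ZMod s,
      (∀ i : Fin r, X (i : ℕ) = c i) →
      (∀ k : ℕ, r ≤ k → k < n + r → X k = f k fun j => X (k - (j : ℕ))) →
      ∀ i : Fin r, X (n + (i : ℕ)) = c i

/-- The valuation determined by circuit `f` and input `c`. -/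
def val (R : Finset ℕ) (r s : ℕ)
    (f : ℕ → ({ j // j ∈ R } → ZMod s) → ZMod s) (c : Fin r → ZMod s) : ℕ → ZMod s
  | k =>
    if h : k < r then c ⟨k, h⟩
    else f k (fun j => if hj : k - (j : ℕ) < k then val R r s f c (k - (j : ℕ)) else 0)
termination_by k => k
decreasing_by exact hj

lemma val_input (R : Finset ℕ) (r s : ℕ)
    (f : ℕ → ({ j // j ∈ R } → ZMod s) → ZMod s) (c : Fin r → ZMod s)
    (i : Fin r) : val R r s f c (i : ℕ) = c i := by
  rw [val]
  simp [i.isLt]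

lemma val_step (R : Finset ℕ) (r s : ℕ)
    (f : ℕ → ({ j // j ∈ R } → ZMod s) → ZMod s) (c : Fin r → ZMod s)
    (hpos : ∀ j ∈ R, 0 < j) (hr : 0 < r) (k : ℕ) (hk : r ≤ k) :
    val R r s f c k = f k (fun j => val R r s f c (k - (j : ℕ))) := by
  rw [val]
  rw [dif_neg (by omega)]
  congr 1
  funext j
  have hj : k - (j : ℕ) < k := Nat.sub_lt (by omega) (hpos _ j.2)
  rw [dif_pos hj]

lemma val_congr (R : Finset ℕ) (r s : ℕ)
    (f : ℕ → ({ j // j ∈ R } → ZMod s) → ZMod s) (c c' : Fin r → ZMod s)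
    (hmax : ∀ j ∈ R, j ≤ r) :
    ∀ k, (∀ i : Fin r, (i : ℕ) ≡ k [MOD R.gcd id] → c i = c' i) →
      val R r s f c k = val R r s f c' k := by
  intro k
  induction k using Nat.strong_induction_on with
  | _ k ih =>
    intro hc
    rw [val, val]
    by_cases h : k < r
    · rw [dif_pos h, dif_pos h]
      exact hc ⟨k, h⟩ (Nat.ModEq.refl k)
    · rw [dif_neg h, dif_neg h]
      congr 1
      funext j
      by_cases hj : k - (j : ℕ) < k
      · rw [dif_pos hj, dif_pos hj]
        refine ih _ hj ?_
        intro i hi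
        apply hc
        refine hi.trans ?_
        have hjk : (j : ℕ) ≤ k := le_trans (hmax _ j.2) (by omega)
        rw [Nat.modEq_iff_dvd' (Nat.sub_le _ _)]
        rw [Nat.sub_sub_self hjk]
        exact Finset.gcd_dvd j.2
      · rw [dif_neg hj, dif_neg hj]

/-- If `n` is not a multiple of `gcd(R)`, then the clock network `N_n(R)` is not
`s`-solvable for any `s ≥ 2`. -/
theorem not_solvable_of_not_dvd (R : Finset ℕ) (r n : ℕ)
    (hrR : r ∈ R) (hmax : ∀ j ∈ R, j ≤ r) (hpos : ∀ j ∈ R, 0 < j)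
    (hn : r ≤ n) (hndvd : ¬ R.gcd id ∣ n) :
    ∀ s : ℕ, 2 ≤ s → ¬ Solvable R r n s := by
  intro s hs ⟨f, hf⟩
  have hr : 0 < r := hpos _ hrR
  haveI : Fact (1 < s) := ⟨hs⟩
  set g := R.gcd id with hg
  -- two inputs differing only at index 0
  set c : Fin r → ZMod s := fun _ => 0 with hc
  set c' : Fin r → ZMod s := fun i => if (i : ℕ) = 0 then 1 else 0 with hc'
  have h1 := hf c (val R r s f c) (val_input R r s f c)
    (fun k hk _ => val_step R r s f c hpos hr k hk) ⟨0, hr⟩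
  have h2 := hf c' (val R r s f c') (val_input R r s f c')
    (fun k hk _ => val_step R r s f c' hpos hr k hk) ⟨0, hr⟩
  have heq : val R r s f c n = val R r s f c' n := by
    apply val_congr R r s f c c' hmax
    intro i hi
    simp only [hc, hc']
    rw [if_neg]
    intro h0
    rw [h0] at hi
    exact hndvd ((Nat.modEq_zero_iff_dvd).mp hi.symm)
  simp only [Nat.add_zero] at h1 h2
  rw [h1, h2] at heq
  simp only [hc, hc', if_pos rfl] at heq
  exact zero_ne_one heq
end

section
/- Let R be a finite set of positive integers with d = gcd(R) > 1 and r = max(R), and let n ≥ r be a multiple of d. Set R′ = {j/d : j ∈ R}. Then for every integer s ≥ 2, the clock network N_n(R) is s-solvable if and only if the clock network N_{n/d}(R′) is s-solvable. -/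
def valX {α : Type*} (g : ∀ k : ℕ, (∀ i, i < k → α) → α) : ℕ → α
  | k => g k (fun i _ => valX g i)
  termination_by k => k

lemma valX_eq {α : Type*} (g : ∀ k : ℕ, (∀ i, i < k → α) → α) (k : ℕ) :
    valX g k = g k (fun i _ => valX g i) := by rw [valX]

/-- If `d = gcd(R) > 1`, `r = max(R)`, and `n ≥ r` is a multiple of `d`, then for every
`s ≥ 2` the clock network `N_n(R)` is `s`-solvable if and only if `N_{n/d}(R')` is,
where `R' = {j / d : j ∈ R}`. -/
theorem solvable_iff_solvable_div_gcd (R : Finset ℕ) (r n s : ℕ)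
    (hrR : r ∈ R) (hmax : ∀ j ∈ R, j ≤ r) (hpos : ∀ j ∈ R, 0 < j)
    (hd : 1 < R.gcd id) (hn : r ≤ n) (hdvd : R.gcd id ∣ n) (hs : 2 ≤ s) :
    Solvable R r n s ↔
      Solvable (R.image fun j => j / R.gcd id) (r / R.gcd id) (n / R.gcd id) s := by
  set d := R.gcd id with hdef
  have hd0 : 0 < d := by omega
  have hdvdR : ∀ j ∈ R, d ∣ j := fun j hj => Finset.gcd_dvd hj
  have hdr : d ∣ r := hdvdR r hrR
  set r' := r / d with hr'def
  set n' := n / d with hn'def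
  have hr : r = d * r' := (Nat.mul_div_cancel' hdr).symm
  have hnn : n = d * n' := (Nat.mul_div_cancel' hdvd).symm
  have hr0 : 0 < r := hpos r hrR
  have hr'0 : 0 < r' := Nat.div_pos (Nat.le_of_dvd hr0 hdr) hd0
  have hrn' : r' ≤ n' := Nat.div_le_div_right hn
  have hmem' : ∀ j' : { j // j ∈ R.image fun j => j / d }, d * (j' : ℕ) ∈ R := by
    rintro ⟨j', hj'⟩
    rcases Finset.mem_image.mp hj' with ⟨j, hj, rfl⟩
    simpa [Nat.mul_div_cancel' (hdvdR j hj)] using hj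
  constructor
  · rintro ⟨f, hf⟩
    refine ⟨fun k g => f (d * k) (fun j => g ⟨(j : ℕ) / d,
      Finset.mem_image_of_mem _ j.2⟩), ?_⟩
    intro c' X' hin hrec i'
    set base : ℕ → ZMod s := fun k => if h : k / d < r' then c' ⟨k / d, h⟩ else 0 with hbase
    set X : ℕ → ZMod s := valX (fun k prev => if k < r then base k
      else f k (fun j => if h2 : k - (j : ℕ) < k then prev _ h2 else 0)) with hX
    have hXlt : ∀ k, k < r → X k = base k := by
      intro k hk; rw [hX, valX_eq, if_pos hk]
    have hXge : ∀ k, r ≤ k → X k = f k (fun j => X (k - (j : ℕ))) := by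
      intro k hk
      rw [hX, valX_eq, if_neg (not_lt.mpr hk)]
      congr 1
      funext j
      have h2 : k - (j : ℕ) < k := Nat.sub_lt (by omega) (hpos _ j.2)
      rw [dif_pos h2]
    have key := hf (fun i : Fin r => X i) X (fun i => rfl) (fun k hk _ => hXge k hk)
    clear_value X base
    have claim : ∀ m, m < n' + r' → X (d * m) = X' m := by
      intro m
      induction m using Nat.strong_induction_on with
      | _ m ih =>
        intro hm
        by_cases hmr : m < r'
        · have h1 : d * m < r := by rw [hr]; exact (mul_lt_mul_iff_right₀ hd0).mpr hmr
          rw [hXlt _ h1]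
          have hdm : d * m / d = m := Nat.mul_div_cancel_left m hd0
          rw [hbase]
          simp only [hdm, dif_pos hmr]
          exact (hin ⟨m, hmr⟩).symm
        · have hmr' : r' ≤ m := le_of_not_gt hmr
          have h1 : r ≤ d * m := by rw [hr]; exact Nat.mul_le_mul_left d hmr'
          rw [hXge _ h1, hrec m hmr' hm]
          apply congrArg (f (d * m))
          funext j
          have hdj := hdvdR _ j.2
          have hjr : (j : ℕ) ≤ r := hmax _ j.2
          have hjd1 : 1 ≤ (j : ℕ) / d :=
            (Nat.one_le_div_iff hd0).mpr (Nat.le_of_dvd (hpos _ j.2) hdj)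
          have hjm : (j : ℕ) / d ≤ m := by
            have : (j : ℕ) / d ≤ r' := by rw [hr'def]; exact Nat.div_le_div_right hjr
            omega
          have heq : d * m - (j : ℕ) = d * (m - (j : ℕ) / d) := by
            rw [Nat.mul_sub, Nat.mul_div_cancel' hdj]
          rw [heq, ih (m - (j : ℕ) / d) (by omega) (by omega)]
    have h1 : X (d * (n' + (i' : ℕ))) = X' (n' + (i' : ℕ)) :=
      claim _ (by have := i'.2; omega)
    have h2 : X (d * (i' : ℕ)) = X' (i' : ℕ) := claim _ (by have := i'.2; omega)
    have hlt : d * (i' : ℕ) < r := by rw [hr]; exact (mul_lt_mul_iff_right₀ hd0).mpr i'.2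
    have h3 := key ⟨d * (i' : ℕ), hlt⟩
    have h4 : d * (n' + (i' : ℕ)) = n + d * (i' : ℕ) := by rw [Nat.mul_add, ← hnn]
    rw [h4] at h1
    rw [← h1, ← hin i', ← h2]
    exact h3
  · rintro ⟨f, hf⟩
    refine ⟨fun k g => f (k / d) (fun j' => g ⟨d * (j' : ℕ), hmem' j'⟩), ?_⟩
    intro c X hin hrec i
    set t := (i : ℕ) % d with htdef
    set q := (i : ℕ) / d with hqdef
    have ht : t < d := Nat.mod_lt _ hd0
    have hq : q < r' := by
      rw [hqdef]
      exact Nat.div_lt_of_lt_mul (by rw [← hr] at *; omega)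
    have hcoef : ∀ m, m < r' → d * m + t < r := by
      intro m hm
      calc d * m + t < d * m + d := by omega
        _ = d * (m + 1) := by ring
        _ ≤ d * r' := Nat.mul_le_mul_left d (by omega)
        _ = r := hr.symm
    have main := hf (fun m : Fin r' => c ⟨d * (m : ℕ) + t, hcoef _ m.2⟩)
      (fun m => X (d * m + t)) (fun m => hin ⟨d * (m : ℕ) + t, hcoef _ m.2⟩) ?rec ⟨q, hq⟩
    case rec =>
      intro k hk hk2
      have hlb : r ≤ d * k + t := by
        calc r = d * r' := hr
          _ ≤ d * k := Nat.mul_le_mul_left d hk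
          _ ≤ d * k + t := Nat.le_add_right _ _
      have hub : d * k + t < n + r := by
        calc d * k + t < d * k + d := by omega
          _ = d * (k + 1) := by ring
          _ ≤ d * (n' + r') := Nat.mul_le_mul_left d (by omega)
          _ = n + r := by rw [Nat.mul_add, ← hnn, ← hr]
      have hdiv : (d * k + t) / d = k := by
        rw [Nat.mul_add_div hd0, Nat.div_eq_of_lt ht, Nat.add_zero]
      show X (d * k + t) = f k fun j' => X (d * (k - (j' : ℕ)) + t)
      rw [hrec (d * k + t) hlb hub]
      show f ((d * k + t) / d) (fun j' => X (d * k + t - d * (j' : ℕ))) = _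
      rw [hdiv]
      apply congrArg (f k)
      funext j'
      have hjR : d * (j' : ℕ) ∈ R := hmem' j'
      have hjk : (j' : ℕ) ≤ k := by
        have h1 : d * (j' : ℕ) ≤ r := hmax _ hjR
        rw [hr] at h1
        exact le_trans (Nat.le_of_mul_le_mul_left h1 hd0) hk
      have heq : d * k + t - d * (j' : ℕ) = d * (k - (j' : ℕ)) + t := by
        rw [Nat.sub_add_comm (Nat.mul_le_mul_left d hjk), Nat.mul_sub]
      rw [heq]
    have h4 : d * (n' + q) + t = n + (i : ℕ) := by
      rw [Nat.mul_add, ← hnn, Nat.add_assoc]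
      congr 1
      rw [hqdef, htdef]
      exact Nat.div_add_mod _ _
    have h5 : (⟨d * q + t, hcoef q hq⟩ : Fin r) = i := by
      apply Fin.ext
      show d * q + t = (i : ℕ)
      rw [hqdef, htdef]; exact Nat.div_add_mod _ _
    simpa [h4, h5] using main
end

section
/- Let R be a finite set of positive integers with r = max(R), and let s ≥ 2 be an integer. Every R-step matrix over ℤ_s can be expressed as a product of exactly r R-atomic matrices over ℤ_s. -/
/-- An `R`-atomic matrix over `ℤ_s`: an `r × r` matrix with entry `1` in positions
`(i, i+1)` for `1 ≤ i ≤ r-1` (1-indexed), zeros elsewhere in the first `r-1` rows, and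
last row `(α_r, α_{r-1}, …, α_1)` where `α_j = 0` for every `j ∉ R`. -/
def IsAtomicMat (R : Finset ℕ) (r s : ℕ) (A : Matrix (Fin r) (Fin r) (ZMod s)) : Prop :=
  ∀ i j : Fin r,
    ((i : ℕ) + 1 < r → A i j = if (j : ℕ) = (i : ℕ) + 1 then (1 : ZMod s) else 0) ∧
    ((i : ℕ) + 1 = r → r - (j : ℕ) ∉ R → A i j = 0)

/-- An `R`-step matrix over `ℤ_s`: obtained from `I_r` by replacing, for some row `t`,
the `t`-th row by a row `(β_1, …, β_r)` in which `β_i` is allowed to be nonzero only if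
there exists `j ∈ R` with `i + j ≡ t (mod r)` (all 1-indexed). -/
def IsStepMat (R : Finset ℕ) (r s : ℕ) (B : Matrix (Fin r) (Fin r) (ZMod s)) : Prop :=
  ∃ t : Fin r,
    (∀ i j : Fin r, i ≠ t → B i j = if i = j then (1 : ZMod s) else 0) ∧
    ∀ j : Fin r, (¬ ∃ d ∈ R, ((j : ℕ) + 1 + d) % r = ((t : ℕ) + 1) % r) → B t j = 0

/-!
Let `P` be the cyclic shift matrix, so that row `i` of `P * X` is row `i + 1` of `X` (indices
in `ℤ/r`); `P` is atomic because `r ∈ R`. If `B` is a step matrix whose special row is `t`,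
the rotated matrix `Y i j = B (i + t) (j + t)` is the identity except in row `0`, and `P * Y`
is atomic: its last row is row `t` of `B` rotated by `t`, and the step condition
`j + d ≡ 0 (mod r)` forces `d = r - j` for `j ≠ 0` because every `d ∈ R` is at most `r`.
Since `P ^ r = 1`, `B = P ^ (r - t) * Y * P ^ t = P ^ (r - 1 - t) * (P * Y) * P ^ t`,
a product of `r` atomic matrices.
-/

open Fin.CommRing

def shiftMat (r : ℕ) [NeZero r] (α : Type*) [Semiring α] : Matrix (Fin r) (Fin r) α :=
  (Equiv.addRight (1 : Fin r)).toPEquiv.toMatrix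

section Shift

variable {r : ℕ} [NeZero r] {α : Type*} [Semiring α]

lemma shiftMat_pow_mul {n : Type*} (a : ℕ) (X : Matrix (Fin r) n α) :
    shiftMat r α ^ a * X = X.submatrix (· + (a : Fin r)) id := by
  induction a with
  | zero => ext; simp
  | succ a ih =>
    rw [pow_succ', Matrix.mul_assoc, ih, shiftMat, PEquiv.toMatrix_toPEquiv_mul]
    ext i j
    simp [add_assoc, add_comm (1 : Fin r)]

lemma mul_shiftMat_pow {m : Type*} (b : ℕ) (X : Matrix m (Fin r) α) :
    X * shiftMat r α ^ b = X.submatrix id (· - (b : Fin r)) := by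
  induction b with
  | zero => ext; simp
  | succ b ih =>
    rw [pow_succ, ← Matrix.mul_assoc, ih, shiftMat, PEquiv.mul_toMatrix_toPEquiv]
    ext i j
    simp only [Matrix.submatrix_apply, id, Equiv.coe_addRight, Equiv.addRight_symm]
    congr 1
    push_cast
    ring

end Shift

section Atomic

variable {R : Finset ℕ} {r s : ℕ} [NeZero r]

lemma isAtomicMat_shiftMat_mul {Y : Matrix (Fin r) (Fin r) (ZMod s)}
    (hY : ∀ i j, i ≠ 0 → Y i j = if i = j then 1 else 0)
    (hY₀ : ∀ j : Fin r, r - (j : ℕ) ∉ R → Y 0 j = 0) :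
    IsAtomicMat R r s (shiftMat r (ZMod s) * Y) := by
  rw [← pow_one (shiftMat r _), shiftMat_pow_mul, Nat.cast_one]
  intro i j
  constructor
  · intro hi
    have hne : i + 1 ≠ 0 := by
      rw [Ne, Fin.ext_iff, Fin.val_add_one_of_lt' hi]
      simp
    simp only [Matrix.submatrix_apply, id, hY _ _ hne, Fin.ext_iff, Fin.val_add_one_of_lt' hi]
    simp only [eq_comm]
  · intro hi hj
    have hzero : i + 1 = 0 := by
      rw [Fin.ext_iff, Fin.val_add, Fin.val_one', Nat.add_mod_mod, hi, Nat.mod_self, Fin.val_zero]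
    simpa [hzero] using hY₀ j hj

lemma isAtomicMat_shiftMat (hrR : r ∈ R) : IsAtomicMat R r s (shiftMat r (ZMod s)) := by
  rw [← Matrix.mul_one (shiftMat r _)]
  refine isAtomicMat_shiftMat_mul (fun i j _ => Matrix.one_apply) fun j hj => ?_
  rw [Matrix.one_apply, if_neg]
  rintro rfl
  exact hj (by simpa using hrR)

lemma Nat.eq_sub_of_dvd_add {r j d : ℕ} (hj : 0 < j) (hjr : j < r) (hdr : d ≤ r)
    (h : r ∣ j + d) : d = r - j := by
  obtain ⟨k, hk⟩ := h
  rcases k with _ | _ | k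
  · omega
  · omega
  · nlinarith

lemma isAtomicMat_shiftMat_mul_submatrix_add (hrR : r ∈ R) (hmax : ∀ d ∈ R, d ≤ r)
    {B : Matrix (Fin r) (Fin r) (ZMod s)} {t : Fin r}
    (hrows : ∀ i j : Fin r, i ≠ t → B i j = if i = j then (1 : ZMod s) else 0)
    (hrow : ∀ j : Fin r,
      (¬ ∃ d ∈ R, ((j : ℕ) + 1 + d) % r = ((t : ℕ) + 1) % r) → B t j = 0) :
    IsAtomicMat R r s (shiftMat r (ZMod s) * B.submatrix (· + t) (· + t)) := by
  refine isAtomicMat_shiftMat_mul (fun i j hi => ?_) fun j hj => ?_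
  · simp only [Matrix.submatrix_apply, hrows (i + t) _ (by simpa using hi), add_left_inj]
  · rw [Matrix.submatrix_apply, zero_add]
    refine hrow _ fun ⟨d, hd, hmod⟩ => hj ?_
    have hdvd : r ∣ (j : ℕ) + d := by
      rw [← ZMod.natCast_eq_zero_iff]
      have := (ZMod.natCast_eq_natCast_iff' _ _ r).mpr hmod
      push_cast [Fin.val_add, ZMod.natCast_mod] at this ⊢
      linear_combination this
    rcases Nat.eq_zero_or_pos (j : ℕ) with hj0 | hj0
    · simpa [hj0] using hrR
    · rwa [← Nat.eq_sub_of_dvd_add hj0 j.isLt (hmax d hd) hdvd]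

end Atomic

theorem step_eq_prod_atomic_general (R : Finset ℕ) (r s : ℕ)
    (hrR : r ∈ R) (hmax : ∀ j ∈ R, j ≤ r)
    (B : Matrix (Fin r) (Fin r) (ZMod s)) (hB : IsStepMat R r s B) :
    ∃ L : List (Matrix (Fin r) (Fin r) (ZMod s)),
      L.length = r ∧ (∀ A ∈ L, IsAtomicMat R r s A) ∧ L.prod = B := by
  obtain ⟨t, hrows, hrow⟩ := hB
  have : NeZero r := ⟨t.pos.ne'⟩
  set P := shiftMat r (ZMod s)
  refine ⟨.replicate (r - 1 - t) P ++ (P * B.submatrix (· + t) (· + t)) :: .replicate t P,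
    by simp only [List.length_append, List.length_replicate, List.length_cons]; omega, ?_, ?_⟩
  · simp only [List.mem_append, List.mem_replicate, List.mem_cons]
    rintro A (⟨-, rfl⟩ | rfl | ⟨-, rfl⟩)
    · exact isAtomicMat_shiftMat hrR
    · exact isAtomicMat_shiftMat_mul_submatrix_add hrR hmax hrows hrow
    · exact isAtomicMat_shiftMat hrR
  · have hcast : ((r - 1 - t + 1 : ℕ) : Fin r) = -t := by
      rw [show r - 1 - t + 1 = r - t by omega, Nat.cast_sub t.isLt.le, Fin.natCast_self,
        Fin.cast_val_eq_self, zero_sub]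
    rw [List.prod_append, List.prod_cons, List.prod_replicate, List.prod_replicate,
      ← mul_assoc (P ^ _), ← mul_assoc (P ^ _), ← pow_succ, shiftMat_pow_mul,
      mul_shiftMat_pow, hcast]
    ext i j
    simp

/-- Every `R`-step matrix over `ℤ_s` is a product of exactly `r` `R`-atomic matrices. -/
theorem step_eq_prod_atomic (R : Finset ℕ) (r s : ℕ)
    (hrR : r ∈ R) (hmax : ∀ j ∈ R, j ≤ r) (hpos : ∀ j ∈ R, 0 < j) (hs : 2 ≤ s)
    (B : Matrix (Fin r) (Fin r) (ZMod s)) (hB : IsStepMat R r s B) :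
    ∃ L : List (Matrix (Fin r) (Fin r) (ZMod s)),
      L.length = r ∧ (∀ A ∈ L, IsAtomicMat R r s A) ∧ L.prod = B :=
  step_eq_prod_atomic_general R r s hrR hmax B hB
end

section
/- Let R be a finite set of positive integers with gcd(R) = 1 and r = max(R) > 1, and let s ≥ 2 be an integer. For every t with 1 ≤ t ≤ r, the t-toggle matrix T(t) over ℤ_s can be expressed as a product of exactly 2r−3 R-step matrices over ℤ_s. -/
/-- The `t`-toggle matrix over `ℤ_s`: obtained from `I_r` by replacing row `t` by the
row all of whose entries are `-1`. -/
def toggleMat (r s : ℕ) (t : Fin r) : Matrix (Fin r) (Fin r) (ZMod s) :=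
  Matrix.of fun i j => if i = t then -1 else if i = j then 1 else 0

/-- A toggle matrix is a `t`-toggle matrix for some `t`. -/
def IsToggleMat (r s : ℕ) (T : Matrix (Fin r) (Fin r) (ZMod s)) : Prop :=
  ∃ t : Fin r, T = toggleMat r s t

/-!
Since `gcd R = 1`, the steps `d ∈ R` generate `ℤ/r`, and a Cayley digraph of a finite abelian
group has a Hamiltonian path: take one through the subgroup generated by all generators but `a`,
and run through its cosets one after another, jumping between consecutive cosets by `a`.
Walking such a path backwards from `t` orders the rows as `t = u₀, u₁, …, u_{r-1}` so that
column `u_{k+1}` is allowed in row `u_k`; hence the transvections `Gₖ = 1 + E_{uₖ u_{k+1}}`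
and their inverses `1 - E_{uₖ u_{k+1}}` are `R`-step matrices.

Starting from the `R`-step matrix `B = 1 - e_t (2 e_t + e_{u₁})ᵀ`, conjugation by `Gₖ` turns
`1 - e_t wᵀ` into `1 - e_t (w + w_{uₖ} e_{u_{k+1}})ᵀ`, so conjugating by `G₁, …, G_{r-2}` adds
`e_{u₂}, …, e_{u_{r-1}}` to `w` and ends at `1 - e_t (e_t + 𝟙)ᵀ = T(t)`: a product of
`(r - 2) + 1 + (r - 2) = 2r - 3` step matrices.
-/

open AddSubgroup Set

section HamiltonianPath

variable {G : Type*} [AddCommGroup G]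

/-- Runs through the `j`-th coset along `f` translated by `j • (a + f (n - 1))`; the step from the
end of one coset to the start of the next is `a` when `f 0 = 0`. -/
def cosetPath (f : ℕ → G) (n : ℕ) (a : G) (i : ℕ) : G :=
  (i / n) • (a + f (n - 1)) + f (i % n)

variable {f : ℕ → G} {n : ℕ} {a : G}

lemma cosetPath_mul_add (j : ℕ) {k : ℕ} (hk : k < n) :
    cosetPath f n a (n * j + k) = j • (a + f (n - 1)) + f k := by
  have hn : 0 < n := by omega
  rw [cosetPath, Nat.mul_add_div hn, Nat.div_eq_of_lt hk, Nat.add_zero, Nat.mul_add_mod,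
    Nat.mod_eq_of_lt hk]

lemma cosetPath_succ_sub_mem {S : Set G} (hf0 : f 0 = 0)
    (hf : ∀ i, i + 1 < n → f (i + 1) - f i ∈ S) (hn : 0 < n) (i : ℕ) :
    cosetPath f n a (i + 1) - cosetPath f n a i ∈ insert a S := by
  obtain ⟨j, k, hk, rfl⟩ : ∃ j k, k < n ∧ i = n * j + k :=
    ⟨i / n, i % n, Nat.mod_lt i hn, (Nat.div_add_mod i n).symm⟩
  rw [cosetPath_mul_add j hk]
  rcases Nat.lt_or_ge (k + 1) n with hk' | hk'
  · rw [add_assoc, cosetPath_mul_add j hk', add_sub_add_left_eq_sub]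
    exact mem_insert_of_mem a (hf k hk')
  · obtain rfl : k = n - 1 := by omega
    rw [show n * j + (n - 1) + 1 = n * (j + 1) + 0 by
        rw [Nat.add_assoc, Nat.sub_add_cancel hn]; ring,
      cosetPath_mul_add (j + 1) hn, hf0, succ_nsmul]
    convert mem_insert a S using 1
    abel

lemma exists_lt_addOrderOf_sub_nsmul_mem [Finite G] {S : Set G} {x : G}
    (hx : x ∈ closure (insert a S)) :
    ∃ j < addOrderOf (a : G ⧸ closure S), x - j • a ∈ closure S := by
  classical
  have hle : closure (insert a S) ≤
      (zmultiples (a : G ⧸ closure S)).comap (QuotientAddGroup.mk' _) := by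
    rw [closure_le]
    rintro y (rfl | hy)
    · exact mem_zmultiples _
    · simp [(QuotientAddGroup.eq_zero_iff y).2 (subset_closure hy)]
  obtain ⟨j, hj, hja⟩ := Finset.mem_image.1 (mem_zmultiples_iff_mem_range_addOrderOf.1 (hle hx))
  refine ⟨j, Finset.mem_range.1 hj, ?_⟩
  rw [sub_eq_neg_add, ← QuotientAddGroup.eq]
  simpa using hja

lemma pos_of_bijOn_Iio {H : AddSubgroup G} (hf : BijOn f (Iio n) H) : 0 < n := by
  obtain ⟨i, hi, -⟩ := hf.surjOn (zero_mem H)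
  exact pos_of_gt hi

lemma bijOn_cosetPath [Finite G] {S : Set G} (hf : BijOn f (Iio n) (closure S)) :
    BijOn (cosetPath f n a) (Iio (addOrderOf (a : G ⧸ closure S) * n)) (closure (insert a S)) := by
  set c := addOrderOf (a : G ⧸ closure S)
  have hn := pos_of_bijOn_Iio hf
  have hT : f (n - 1) ∈ closure S := hf.mapsTo (show n - 1 < n by omega)
  have hsub : closure S ≤ closure (insert a S) := closure_mono (subset_insert a S)
  have hdecomp : ∀ i ∈ Iio (c * n), ∃ j < c, ∃ k < n, i = n * j + k := fun i hi =>
    ⟨i / n, (Nat.div_lt_iff_lt_mul hn).2 hi, i % n, Nat.mod_lt i hn, (Nat.div_add_mod i n).symm⟩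
  have hcoset : ∀ j {k}, k < n →
      ((cosetPath f n a (n * j + k) : G) : G ⧸ closure S) = j • (a : G ⧸ closure S) := by
    intro j k hk
    rw [cosetPath_mul_add j hk, QuotientAddGroup.mk_add, QuotientAddGroup.mk_nsmul,
      QuotientAddGroup.mk_add, (QuotientAddGroup.eq_zero_iff _).2 hT,
      (QuotientAddGroup.eq_zero_iff _).2 (hf.mapsTo hk), add_zero, add_zero]
  refine ⟨fun i hi => ?_, fun i hi i' hi' h => ?_, fun x hx => ?_⟩
  · obtain ⟨j, -, k, hk, rfl⟩ := hdecomp i hi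
    rw [cosetPath_mul_add j hk]
    exact add_mem (nsmul_mem (add_mem (subset_closure (mem_insert a S)) (hsub hT)) j)
      (hsub (hf.mapsTo hk))
  · obtain ⟨j, hj, k, hk, rfl⟩ := hdecomp i hi
    obtain ⟨j', hj', k', hk', rfl⟩ := hdecomp i' hi'
    obtain rfl : j = j' := by
      have := congrArg (QuotientAddGroup.mk (s := closure S)) h
      rw [hcoset j hk, hcoset j' hk', nsmul_eq_nsmul_iff_modEq] at this
      exact this.eq_of_lt_of_lt hj hj'
    rw [cosetPath_mul_add j hk, cosetPath_mul_add j hk'] at h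
    rw [hf.injOn hk hk' (add_left_cancel h)]
  · obtain ⟨j, hj, hxj⟩ := exists_lt_addOrderOf_sub_nsmul_mem hx
    obtain ⟨k, hk, hfk⟩ := hf.surjOn (sub_mem hxj (nsmul_mem hT j))
    refine ⟨n * j + k, ?_, ?_⟩
    · show n * j + k < c * n
      nlinarith [Set.mem_Iio.1 hk]
    · rw [cosetPath_mul_add j hk, hfk, nsmul_add]
      abel

theorem AddSubgroup.exists_hamiltonian_path_closure [Finite G] (S : Finset G) :
    ∃ (n : ℕ) (f : ℕ → G), f 0 = 0 ∧ (∀ i, i + 1 < n → f (i + 1) - f i ∈ S) ∧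
      BijOn f (Iio n) (closure (S : Set G)) := by
  induction S using Finset.cons_induction with
  | empty =>
    refine ⟨1, fun _ => 0, rfl, fun i hi => by omega, fun _ _ => zero_mem _, ?_, ?_⟩
    · intro i hi j hj _
      simp_all
    · intro x hx
      rw [Finset.coe_empty, AddSubgroup.closure_empty, SetLike.mem_coe, mem_bot] at hx
      exact ⟨0, by simp, hx.symm⟩
  | cons a S ha ih =>
    obtain ⟨n, f, hf0, hstep, hf⟩ := ih
    have hn := pos_of_bijOn_Iio hf
    refine ⟨addOrderOf (a : G ⧸ closure (S : Set G)) * n, cosetPath f n a, ?_, fun i _ => ?_, ?_⟩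
    · simp [cosetPath, hf0]
    · rw [← Finset.mem_coe, Finset.coe_cons]
      exact cosetPath_succ_sub_mem hf0 hstep hn i
    · rw [Finset.coe_cons]
      exact bijOn_cosetPath hf

end HamiltonianPath

open scoped Fin.CommRing

lemma AddSubgroup.natCast_finset_gcd_mem_closure {A : Type*} [Ring A] (S : Finset ℕ) :
    ((S.gcd id : ℕ) : A) ∈ closure (Nat.cast '' (S : Set ℕ) : Set A) := by
  classical
  induction S using Finset.induction_on with
  | empty => simp
  | insert a S _ ih =>
    rw [Finset.coe_insert]
    have hsub : AddSubgroup.closure (Nat.cast '' (S : Set ℕ) : Set A) ≤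
        AddSubgroup.closure (Nat.cast '' insert a (S : Set ℕ)) :=
      closure_mono (image_mono (subset_insert a _))
    have ha : (a : A) ∈ AddSubgroup.closure (Nat.cast '' insert a (S : Set ℕ)) :=
      subset_closure (mem_image_of_mem _ (mem_insert a _))
    rw [Finset.gcd_insert, id, gcd_eq_nat_gcd, ← Int.cast_natCast, Nat.gcd_eq_gcd_ab]
    push_cast
    rw [← Int.cast_comm, ← Int.cast_comm, ← zsmul_eq_mul, ← zsmul_eq_mul]
    exact add_mem (zsmul_mem ha _) (zsmul_mem (hsub ih) _)

lemma Fin.closure_natCast_eq_top_of_finset_gcd_eq_one {r : ℕ} [NeZero r] {R : Finset ℕ}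
    (hR : R.gcd id = 1) :
    AddSubgroup.closure (Nat.cast '' (R : Set ℕ) : Set (Fin r)) = ⊤ := by
  have hone := AddSubgroup.natCast_finset_gcd_mem_closure (A := Fin r) R
  rw [hR, Nat.cast_one] at hone
  refine eq_top_iff' _ |>.2 fun x => ?_
  rw [← Fin.cast_val_eq_self x, ← nsmul_one]
  exact nsmul_mem hone _

theorem Fin.exists_hamiltonian_path_of_finset_gcd_eq_one {r : ℕ} [NeZero r] {R : Finset ℕ}
    (hR : R.gcd id = 1) (t : Fin r) :
    ∃ u : ℕ → Fin r, u 0 = t ∧ BijOn u (Iio r) univ ∧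
      ∀ i, i + 1 < r → ∃ d ∈ R, u (i + 1) + (d : Fin r) = u i := by
  classical
  obtain ⟨n, f, hf0, hstep, hf⟩ :=
    AddSubgroup.exists_hamiltonian_path_closure (R.image (Nat.cast : ℕ → Fin r))
  rw [Finset.coe_image, Fin.closure_natCast_eq_top_of_finset_gcd_eq_one hR, coe_top] at hf
  obtain rfl : n = r := by simpa [hf.image_eq] using hf.injOn.ncard_image.symm
  refine ⟨fun i => t - f i, by simp [hf0], ((Equiv.subLeft t).bijective.bijOn_univ).comp hf,
    fun i hi => ?_⟩
  obtain ⟨d, hd, hdf⟩ := Finset.mem_image.1 (hstep i hi)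
  exact ⟨d, hd, by rw [hdf]; exact sub_add_sub_cancel t _ _⟩

lemma Fin.val_add_one_add_mod_eq {r : ℕ} [NeZero r] {j t : Fin r} {d : ℕ}
    (h : j + (d : Fin r) = t) :
    ((j : ℕ) + 1 + d) % r = ((t : ℕ) + 1) % r := by
  rw [← h, Fin.val_add, Fin.val_natCast, Nat.add_mod_mod, Nat.mod_add_mod, Nat.add_right_comm]

section Transvection

open Matrix

variable {n α : Type*} [DecidableEq n] [CommRing α]

lemma sum_single_one_apply_of_injOn {u : ℕ → n} {m : ℕ} (hu : InjOn u (Iio m)) {i : ℕ}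
    (hi : i < m) : (∑ j ∈ Finset.range m, (Pi.single (u j) 1 : n → α)) (u i) = 1 := by
  rw [Finset.sum_apply, Finset.sum_eq_single i, Pi.single_eq_same]
  · exact fun j hj hji =>
      Pi.single_eq_of_ne (fun h => hji (hu hi (Finset.mem_range.1 hj) h).symm) _
  · exact fun h => absurd (Finset.mem_range.2 hi) h

lemma sum_single_one_eq_one_of_bijOn {u : ℕ → n} {m : ℕ} (hu : BijOn u (Iio m) univ) :
    ∑ j ∈ Finset.range m, (Pi.single (u j) 1 : n → α) = 1 := by
  funext x
  obtain ⟨i, hi, rfl⟩ := hu.surjOn (mem_univ x)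
  exact sum_single_one_apply_of_injOn hu.injOn hi

variable [Fintype n]

lemma vecMul_transvection (w : n → α) (a b : n) (c : α) :
    w ᵥ* transvection a b c = w + Pi.single b (w a * c) := by
  rw [transvection, vecMul_add, vecMul_one]
  congr 1
  ext j
  simp [vecMul, dotProduct, single_apply, Pi.single_apply, ite_and, eq_comm]

lemma transvection_mulVec_single_of_ne {a b t : n} (hbt : b ≠ t) (c : α) :
    transvection a b c *ᵥ Pi.single t 1 = Pi.single t 1 := by
  rw [transvection, add_mulVec, one_mulVec, single_mulVec, Pi.single_eq_of_ne hbt, mul_zero]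
  simp

lemma transvection_neg_mul_one_sub_vecMulVec_mul_transvection {a b t : n} (hab : a ≠ b)
    (hbt : b ≠ t) (c : α) (w : n → α) :
    transvection a b (-c) * (1 - vecMulVec (Pi.single t 1) w) * transvection a b c =
      1 - vecMulVec (Pi.single t 1) (w + Pi.single b (w a * c)) := by
  rw [mul_sub, mul_one, sub_mul, transvection_mul_transvection_same a b hab, neg_add_cancel,
    transvection_zero, mul_vecMulVec, vecMulVec_mul, transvection_mulVec_single_of_ne hbt,
    vecMul_transvection]

theorem prod_transvection_conj_one_sub_vecMulVec (u : ℕ → n) (k : ℕ) (hu : InjOn u (Iio (k + 2))) :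
    ((List.range' 1 k).map fun i => transvection (u i) (u (i + 1)) (-1 : α)).reverse.prod *
        (1 - vecMulVec (Pi.single (u 0) 1)
          (Pi.single (u 0) 1 + ∑ i ∈ Finset.range 2, Pi.single (u i) 1)) *
        ((List.range' 1 k).map fun i => transvection (u i) (u (i + 1)) 1).prod =
      1 - vecMulVec (Pi.single (u 0) 1)
        (Pi.single (u 0) 1 + ∑ i ∈ Finset.range (k + 2), Pi.single (u i) 1) := by
  induction k with
  | zero => simp
  | succ k ih =>
    have hne : ∀ {i j}, i < k + 3 → j < k + 3 → i ≠ j → u i ≠ u j :=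
      fun hi hj hij h => hij (hu hi hj h)
    have hsplit : ∀ g : ℕ → Matrix n n α, ((List.range' 1 (k + 1)).map g).prod =
        ((List.range' 1 k).map g).prod * g (k + 1) := fun g => by
      simp [List.range'_concat, Nat.add_comm]
    have hsplit_rev : ∀ g : ℕ → Matrix n n α, ((List.range' 1 (k + 1)).map g).reverse.prod =
        g (k + 1) * ((List.range' 1 k).map g).reverse.prod := fun g => by
      simp [List.range'_concat, Nat.add_comm]
    rw [hsplit, hsplit_rev,
      show ∀ A B C D E : Matrix n n α, A * B * C * (D * E) = A * (B * C * D) * E by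
        intros; simp only [mul_assoc],
      ih (hu.mono (Iio_subset_Iio (by omega))),
      transvection_neg_mul_one_sub_vecMulVec_mul_transvection (hne (by omega) (by omega) (by omega))
        (hne (by omega) (by omega) (by omega)), Finset.sum_range_succ _ (k + 2)]
    rw [mul_one, Pi.add_apply, Pi.single_eq_of_ne (hne (by omega) (by omega) (by omega)), zero_add,
      sum_single_one_apply_of_injOn (hu.mono (Iio_subset_Iio (by omega))) (by omega), add_assoc]

end Transvection

section StepMatrices

open Matrix

variable {R : Finset ℕ} {r s : ℕ} [NeZero r]

lemma isStepMat_of_row_support (hrR : r ∈ R) {M : Matrix (Fin r) (Fin r) (ZMod s)} {a b : Fin r}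
    (hab : ∃ d ∈ R, b + (d : Fin r) = a)
    (hrows : ∀ i, i ≠ a → ∀ j, M i j = (1 : Matrix _ _ _) i j)
    (hrow : ∀ j, j ≠ a → j ≠ b → M a j = 0) : IsStepMat R r s M := by
  refine ⟨a, fun i j hi => by rw [hrows i hi, one_apply], fun j hj => hrow j ?_ ?_⟩
  · rintro rfl
    exact hj ⟨r, hrR, Nat.add_mod_right _ _⟩
  · rintro rfl
    obtain ⟨d, hd, hda⟩ := hab
    exact hj ⟨d, hd, Fin.val_add_one_add_mod_eq hda⟩

lemma isStepMat_transvection (hrR : r ∈ R) {a b : Fin r} (hab : ∃ d ∈ R, b + (d : Fin r) = a)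
    (c : ZMod s) : IsStepMat R r s (transvection a b c) :=
  isStepMat_of_row_support hrR hab
    (fun i hi j => by simp [transvection, Ne.symm hi])
    (fun j hja hjb => by simp [transvection, one_apply, Ne.symm hja, Ne.symm hjb])

lemma isStepMat_one_sub_vecMulVec (hrR : r ∈ R) {a b : Fin r} (hab : ∃ d ∈ R, b + (d : Fin r) = a)
    {w : Fin r → ZMod s} (hw : ∀ j, j ≠ a → j ≠ b → w j = 0) :
    IsStepMat R r s (1 - vecMulVec (Pi.single a 1) w) :=
  isStepMat_of_row_support hrR hab
    (fun i hi j => by simp [vecMulVec, Pi.single_eq_of_ne hi])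
    (fun j hja hjb => by simp [vecMulVec, one_apply, Ne.symm hja, hw j hja hjb])

end StepMatrices

lemma toggleMat_eq_one_sub_vecMulVec (r s : ℕ) (t : Fin r) :
    toggleMat r s t = 1 - Matrix.vecMulVec (Pi.single t 1) (Pi.single t 1 + 1) := by
  ext i j
  rcases eq_or_ne i t with rfl | hi
  · rcases eq_or_ne j i with rfl | hj
    · simp [toggleMat, Matrix.vecMulVec]
    · simp [toggleMat, Matrix.vecMulVec, hj, Ne.symm hj]
  · simp [toggleMat, Matrix.vecMulVec, Matrix.one_apply, hi]

theorem toggle_eq_prod_step_general (R : Finset ℕ) (r s : ℕ)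
    (hrR : r ∈ R) (hgcd : R.gcd id = 1) (hr : 1 < r) (t : Fin r) :
    ∃ L : List (Matrix (Fin r) (Fin r) (ZMod s)),
      L.length = 2 * r - 3 ∧ (∀ B ∈ L, IsStepMat R r s B) ∧ L.prod = toggleMat r s t := by
  obtain ⟨p, rfl⟩ : ∃ p, r = p + 2 := ⟨r - 2, by omega⟩
  obtain ⟨u, rfl, hu, hlink⟩ := Fin.exists_hamiltonian_path_of_finset_gcd_eq_one hgcd t
  refine ⟨((List.range' 1 p).map fun i => Matrix.transvection (u i) (u (i + 1)) (-1)).reverse ++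
      [1 - Matrix.vecMulVec (Pi.single (u 0) 1)
        (Pi.single (u 0) 1 + ∑ i ∈ Finset.range 2, Pi.single (u i) 1)] ++
      (List.range' 1 p).map fun i => Matrix.transvection (u i) (u (i + 1)) 1, ?_, ?_, ?_⟩
  · simp only [List.length_append, List.length_reverse, List.length_map, List.length_range',
      List.length_singleton]
    omega
  · intro B hB
    simp only [List.mem_append, List.mem_reverse, List.mem_map, List.mem_range'_1,
      List.mem_singleton] at hB
    rcases hB with (⟨i, hi, rfl⟩ | rfl) | ⟨i, hi, rfl⟩
    · exact isStepMat_transvection hrR (hlink i (by omega)) _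
    · refine isStepMat_one_sub_vecMulVec hrR (hlink 0 (by omega)) fun j hj0 hj1 => ?_
      simp [Finset.sum_range_succ, hj0, hj1]
    · exact isStepMat_transvection hrR (hlink i (by omega)) _
  · rw [List.prod_append, List.prod_append, List.prod_singleton,
      prod_transvection_conj_one_sub_vecMulVec u p hu.injOn, sum_single_one_eq_one_of_bijOn hu,
      toggleMat_eq_one_sub_vecMulVec]

/-- If `gcd(R) = 1` and `r = max(R) > 1`, then every `t`-toggle matrix over `ℤ_s` is a
product of exactly `2r - 3` `R`-step matrices. -/
theorem toggle_eq_prod_step (R : Finset ℕ) (r s : ℕ)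
    (hrR : r ∈ R) (hmax : ∀ j ∈ R, j ≤ r) (hpos : ∀ j ∈ R, 0 < j)
    (hgcd : R.gcd id = 1) (hr : 1 < r) (hs : 2 ≤ s) (t : Fin r) :
    ∃ L : List (Matrix (Fin r) (Fin r) (ZMod s)),
      L.length = 2 * r - 3 ∧ (∀ B ∈ L, IsStepMat R r s B) ∧ L.prod = toggleMat r s t :=
  toggle_eq_prod_step_general R r s hrR hgcd hr t
end

section
/- Let r ≥ 1 and s ≥ 2 be integers. Every r×r permutation matrix over ℤ_s can be expressed as a product of at most ⌊3r/2⌋ toggle matrices over ℤ_s. -/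
open Equiv Matrix Finset

theorem List.formPerm_cons_reverse_eq_prod_map_swap {α : Type*} [DecidableEq α] {a : α}
    {l : List α} (h : (a :: l).Nodup) :
    formPerm (a :: l.reverse) = (l.map (Equiv.swap a)).prod := by
  induction l with
  | nil => simp
  | cons b l ih =>
    have hrot : formPerm (a :: l.reverse ++ [b]) = formPerm (b :: a :: l.reverse) := by
      rw [← formPerm_rotate_one (b :: a :: l.reverse) (by grind)]
      simp
    rw [reverse_cons, ← cons_append, hrot, formPerm_cons_cons, ih (by grind), Equiv.swap_comm]
    simp

theorem Matrix.permMatrixHom_mul_apply {n R : Type*} [DecidableEq n] [Fintype n]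
    [NonAssocSemiring R] (σ : Perm n) (A : Matrix n n R) (i j : n) :
    (permMatrixHom (R := R) σ * A) i j = A (σ⁻¹ i) j := by
  simp [PEquiv.toMatrix_toPEquiv_mul]

variable {r s : ℕ}

theorem toggleMat_mul_apply (t : Fin r) (A : Matrix (Fin r) (Fin r) (ZMod s)) (i j : Fin r) :
    (toggleMat r s t * A) i j = if i = t then -∑ k, A k j else A i j := by
  split_ifs with h <;> simp [mul_apply, toggleMat, h, ite_mul]

theorem sum_toggleMat_apply (t j : Fin r) :
    ∑ k, toggleMat r s t k j = if j = t then -1 else 0 := by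
  rw [Fintype.sum_eq_add_sum_compl t]
  simp only [toggleMat, of_apply, if_pos]
  rw [sum_congr rfl fun k hk => if_neg (mem_compl.1 hk ∘ mem_singleton.2), sum_ite_eq']
  by_cases h : j = t <;> simp [h]

theorem toggleMat_mul_self (t : Fin r) : toggleMat r s t * toggleMat r s t = 1 := by
  ext i j
  rw [toggleMat_mul_apply, sum_toggleMat_apply]
  simp only [toggleMat, of_apply, one_apply]
  split_ifs <;> grind

theorem toggleMat_mul_toggleMat {a b : Fin r} (hab : a ≠ b) :
    toggleMat r s a * toggleMat r s b = permMatrixHom (swap a b) * toggleMat r s a := by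
  ext i j
  rw [toggleMat_mul_apply, sum_toggleMat_apply, permMatrixHom_mul_apply, swap_inv]
  simp only [toggleMat, of_apply, swap_apply_def]
  split_ifs <;> grind

theorem toggleMat_mul_prod_map_toggleMat {a : Fin r} {l : List (Fin r)} (ha : a ∉ l) :
    toggleMat r s a * (l.map (toggleMat r s)).prod =
      permMatrixHom ((l.map (swap a)).prod) * toggleMat r s a := by
  induction l with
  | nil => simp
  | cons b l ih =>
    rw [List.map_cons, List.prod_cons, ← mul_assoc, toggleMat_mul_toggleMat (by grind), mul_assoc,
      ih (by grind), List.map_cons, List.prod_cons, map_mul, mul_assoc]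

theorem Equiv.Perm.IsCycle.exists_prod_map_toggleMat_eq {c : Perm (Fin r)} (hc : c.IsCycle) :
    ∃ L : List (Fin r), L.length = #c.support + 1 ∧
      (L.map (toggleMat r s)).prod = permMatrixHom c := by
  obtain ⟨a, ha⟩ := hc.nonempty_support
  obtain ⟨b, l, hl⟩ := List.exists_cons_of_length_pos (length_toList_pos_of_mem_support c a ha)
  obtain rfl : a = b := by simpa [hl] using (toList_getElem_zero c a ha).symm
  have hnodup : (a :: l.reverse).Nodup := by simpa [hl] using nodup_toList c a
  refine ⟨a :: l.reverse ++ [a], ?_, ?_⟩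
  · have hlen := length_toList c a
    rw [hl, hc.cycleOf_eq (mem_support.1 ha)] at hlen
    simp [← hlen]
  · have hc : c = List.formPerm (a :: l.reverse.reverse) := by
      rw [List.reverse_reverse, ← hl, formPerm_toList, hc.cycleOf_eq (mem_support.1 ha)]
    rw [List.map_append, List.map_cons, List.prod_append, List.prod_cons,
      toggleMat_mul_prod_map_toggleMat (List.nodup_cons.1 hnodup).1, hc,
      List.formPerm_cons_reverse_eq_prod_map_swap hnodup]
    simp [mul_assoc, toggleMat_mul_self]

theorem exists_prod_map_toggleMat_eq (σ : Perm (Fin r)) :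
    ∃ L : List (Fin r), 2 * L.length ≤ 3 * #σ.support ∧
      (L.map (toggleMat r s)).prod = permMatrixHom σ := by
  induction σ using Equiv.Perm.cycle_induction_on with
  | base_one => exact ⟨[], by simp, by simp⟩
  | base_cycles c hc =>
    obtain ⟨L, hlen, hprod⟩ := hc.exists_prod_map_toggleMat_eq (s := s)
    have hcard := hc.two_le_card_support
    exact ⟨L, by omega, hprod⟩
  | induction_disjoint σ τ hd _ hσ hτ =>
    obtain ⟨L₁, hlen₁, hprod₁⟩ := hσ
    obtain ⟨L₂, hlen₂, hprod₂⟩ := hτ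
    refine ⟨L₁ ++ L₂, ?_, ?_⟩
    · rw [hd.card_support_mul, List.length_append]
      omega
    · rw [List.map_append, List.prod_append, hprod₁, hprod₂, map_mul]

theorem permMatrix_eq_prod_toggle_general (r s : ℕ)
    (σ : Equiv.Perm (Fin r)) :
    ∃ L : List (Matrix (Fin r) (Fin r) (ZMod s)),
      L.length ≤ 3 * r / 2 ∧ (∀ T ∈ L, IsToggleMat r s T) ∧
      L.prod = Matrix.of fun i j => if σ j = i then (1 : ZMod s) else 0 := by
  obtain ⟨L, hlen, hprod⟩ := exists_prod_map_toggleMat_eq (s := s) σ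
  have hsupp : #σ.support ≤ r := by simpa using σ.support.card_le_univ
  refine ⟨L.map (toggleMat r s), ?_, ?_, ?_⟩
  · rw [List.length_map]
    omega
  · simp only [List.mem_map]
    rintro _ ⟨t, -, rfl⟩
    exact ⟨t, rfl⟩
  · rw [hprod]
    ext i j
    simp [Equiv.eq_symm_apply, eq_comm]

/-- Every `r × r` permutation matrix over `ℤ_s` is a product of at most `⌊3r/2⌋`
toggle matrices. -/
theorem permMatrix_eq_prod_toggle (r s : ℕ) (hr : 1 ≤ r) (hs : 2 ≤ s)
    (σ : Equiv.Perm (Fin r)) :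
    ∃ L : List (Matrix (Fin r) (Fin r) (ZMod s)),
      L.length ≤ 3 * r / 2 ∧ (∀ T ∈ L, IsToggleMat r s T) ∧
      L.prod = Matrix.of fun i j => if σ j = i then (1 : ZMod s) else 0 :=
  permMatrix_eq_prod_toggle_general r s σ
end

section
/- Let r ≥ 1 and s ≥ 2 be integers, and let σ be a k-cycle on the set {1,…,r} (a permutation that cyclically permutes k distinct elements and fixes all others). Then the r×r permutation matrix of σ over ℤ_s can be expressed as a product of exactly k+1 toggle matrices over ℤ_s. -/
/-!
Append to a vector `v` the extra coordinate `∗ = -∑ v`, so that it becomes a vector of sum zero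
indexed by `Option (Fin r)`. The toggle matrix `T(t)` replaces `v t` by `-∑ v`, which turns the
sum into `-v t`: on the augmented vector it just exchanges the coordinates `t` and `∗`.
A product of toggle matrices therefore acts as a product of transpositions `(∗ t)`, and a
`k`-cycle `(b₁ … b_k)` extended by the fixed point `∗` is the product of the `k + 1`
transpositions `(∗ b₁)(∗ b_k)(∗ b_{k-1}) ⋯ (∗ b₁)`.
-/

open Equiv Equiv.Perm Matrix

namespace List

variable {α : Type*} [DecidableEq α]

theorem formPerm_map_some (l : List α) : (l.map some).formPerm = l.formPerm.optionCongr := by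
  induction l with
  | nil => simp
  | cons x l ih =>
    cases l with
    | nil => simp
    | cons y l =>
      simp only [map_cons] at ih ⊢
      rw [formPerm_cons_cons, ih, formPerm_cons_cons, Perm.mul_def, Perm.mul_def,
        optionCongr_trans, optionCongr_swap]

theorem formPerm_cons_eq_prod_map_swap (x : α) (m : List α) (h : (x :: m).Nodup) :
    formPerm (x :: m) = (m.reverse.map (Equiv.swap x)).prod := by
  induction m using List.reverseRecOn with
  | nil => simp
  | append_singleton m b ih =>
    have hrot : (b :: x :: m).rotate 1 = x :: (m ++ [b]) := by simp
    have hnd : (b :: x :: m).Nodup := by rw [← nodup_rotate (n := 1), hrot]; exact h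
    rw [← hrot, formPerm_rotate _ hnd, formPerm_cons_cons, ih hnd.of_cons]
    simp [Equiv.swap_comm]

end List

theorem Equiv.Perm.IsCycle.exists_optionCongr_eq_prod_swap {α : Type*} [Fintype α]
    [DecidableEq α] {π : Perm α} (hπ : π.IsCycle) :
    ∃ ts : List α, ts.length = π.support.card + 1 ∧
      π.optionCongr = (ts.map fun t => swap none (some t)).prod := by
  obtain ⟨x, hx, -⟩ := id hπ
  have hform : (π.toList x).formPerm = π := by rw [formPerm_toList, hπ.cycleOf_eq hx]
  have hlen : (π.toList x).length = π.support.card := by rw [length_toList, hπ.cycleOf_eq hx]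
  have hnd := nodup_toList π x
  generalize π.toList x = l at hform hlen hnd
  subst hform
  cases l with
  | nil => simp at hπ
  | cons b l =>
    refine ⟨b :: (b :: l).reverse, by simp [← hlen], ?_⟩
    have hnd' : (none :: some b :: l.map some).Nodup :=
      List.nodup_cons.2 ⟨by simp, hnd.map (Option.some_injective α)⟩
    rw [← List.formPerm_map_some, List.map_cons,
      ← swap_mul_self_mul none (some b) (List.formPerm _), ← List.formPerm_cons_cons,
      List.formPerm_cons_eq_prod_map_swap _ _ hnd']
    simp [List.map_reverse, Function.comp_def]

section WithNegSum

variable {n R : Type*} [Fintype n] [AddCommGroup R]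

def withNegSum (v : n → R) : Option n → R := fun o => o.elim (-∑ j, v j) v

theorem withNegSum_injective : Function.Injective (withNegSum : (n → R) → Option n → R) :=
  fun _ _ h => funext fun i => congrFun h (some i)

theorem withNegSum_update [DecidableEq n] (v : n → R) (t : n) :
    withNegSum (Function.update v t (-∑ j, v j)) = withNegSum v ∘ swap none (some t) := by
  ext (_ | i)
  · simp [withNegSum, Finset.sum_update_of_mem]
  · by_cases hi : i = t
    · subst hi; simp [withNegSum]
    · simp [withNegSum, hi, swap_apply_of_ne_of_ne]

theorem withNegSum_comp_perm (v : n → R) (σ : Perm n) :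
    withNegSum (v ∘ σ) = withNegSum v ∘ σ.optionCongr := by
  ext (_ | i)
  · simp [withNegSum, Equiv.sum_comp σ v]
  · simp [withNegSum]

end WithNegSum

theorem toggleMat_mulVec {r s : ℕ} (t : Fin r) (v : Fin r → ZMod s) :
    toggleMat r s t *ᵥ v = Function.update v t (-∑ j, v j) := by
  ext i
  by_cases hi : i = t <;> simp [toggleMat, mulVec, dotProduct, hi]

theorem withNegSum_prod_toggleMat_mulVec {r s : ℕ} (ts : List (Fin r)) (v : Fin r → ZMod s) :
    withNegSum ((ts.map (toggleMat r s)).prod *ᵥ v) =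
      withNegSum v ∘ (ts.reverse.map fun t => swap none (some t)).prod := by
  induction ts with
  | nil => simp
  | cons t ts ih =>
    rw [List.map_cons, List.prod_cons, ← mulVec_mulVec, toggleMat_mulVec, withNegSum_update, ih]
    simp [Function.comp_assoc]

theorem Equiv.Perm.permMatrix_inv_eq_of {n R : Type*} [DecidableEq n] [Zero R] [One R]
    (σ : Perm n) : σ⁻¹.permMatrix R = Matrix.of fun i j => if σ j = i then 1 else 0 := by
  ext i j
  simp [PEquiv.toMatrix_apply, toPEquiv_apply, Perm.inv_def, Equiv.eq_symm_apply, eq_comm]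

theorem cycle_permMatrix_eq_prod_toggle_general (r s k : ℕ)
    (σ : Equiv.Perm (Fin r)) (hσ : σ.IsCycle) (hk : σ.support.card = k) :
    ∃ L : List (Matrix (Fin r) (Fin r) (ZMod s)),
      L.length = k + 1 ∧ (∀ T ∈ L, IsToggleMat r s T) ∧
      L.prod = Matrix.of fun i j => if σ j = i then (1 : ZMod s) else 0 := by
  obtain ⟨ts, hlen, hts⟩ := hσ.inv.exists_optionCongr_eq_prod_swap
  refine ⟨ts.reverse.map (toggleMat r s), by simp [hlen, hk],
    List.forall_mem_map.2 fun t _ => ⟨t, rfl⟩, ?_⟩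
  rw [← permMatrix_inv_eq_of, ext_iff_mulVec]
  intro v
  apply withNegSum_injective
  rw [withNegSum_prod_toggleMat_mulVec, List.reverse_reverse, ← hts, permMatrix_mulVec,
    withNegSum_comp_perm]

/-- If `σ` is a `k`-cycle on `{1, …, r}`, then the `r × r` permutation matrix of `σ`
over `ℤ_s` is a product of exactly `k + 1` toggle matrices. -/
theorem cycle_permMatrix_eq_prod_toggle (r s k : ℕ) (hr : 1 ≤ r) (hs : 2 ≤ s)
    (σ : Equiv.Perm (Fin r)) (hσ : σ.IsCycle) (hk : σ.support.card = k) :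
    ∃ L : List (Matrix (Fin r) (Fin r) (ZMod s)),
      L.length = k + 1 ∧ (∀ T ∈ L, IsToggleMat r s T) ∧
      L.prod = Matrix.of fun i j => if σ j = i then (1 : ZMod s) else 0 :=
  cycle_permMatrix_eq_prod_toggle_general r s k σ hσ hk
end

section
/- Let R be a finite set of positive integers with r = max(R), let n ≥ r and s ≥ 2 be integers. The clock network N_n(R) is linearly s-solvable if and only if the r×r identity matrix over ℤ_s can be expressed as a product of exactly n R-atomic matrices over ℤ_s. -/
/-- `M` is an `R`-circuit matrix of length `n` over `ℤ_s`: an `(n+r) × r` matrix whose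
first `r` rows form `I_r`, and such that every row `k` with `r < k ≤ n+r` (1-indexed;
here 0-indexed `r ≤ k < n+r`) is a `ℤ_s`-linear combination of the rows with indices in
`{k - d : d ∈ R}`. -/
def IsCircuitMatrix (R : Finset ℕ) (r n s : ℕ)
    (M : Matrix (Fin (n + r)) (Fin r) (ZMod s)) : Prop :=
  (∀ i j : Fin r, M ⟨(i : ℕ), by have := i.isLt; omega⟩ j
      = if i = j then (1 : ZMod s) else 0) ∧
  ∀ k : ℕ, r ≤ k → ∀ hk : k < n + r, ∃ lam : ℕ → ZMod s,
    ∀ j : Fin r, M ⟨k, hk⟩ j = ∑ d ∈ R, lam d * M ⟨k - d, by omega⟩ j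

/-- The clock network `N_n(R)` is linearly `s`-solvable: there is an `R`-circuit matrix
of length `n` over `ℤ_s` whose last `r` rows also form `I_r`. -/
def LinearlySolvable (R : Finset ℕ) (r n s : ℕ) : Prop :=
  ∃ M : Matrix (Fin (n + r)) (Fin r) (ZMod s),
    IsCircuitMatrix R r n s M ∧
    ∀ i j : Fin r, M ⟨n + (i : ℕ), by have := i.isLt; omega⟩ j
      = if i = j then (1 : ZMod s) else 0

/-!
Read the rows of a circuit matrix as a sequence `v` and let `W_k` be the `r × r` window of rows
`k, …, k + r - 1`. Row `k + r` is an `R`-combination of the rows `k + r - d` exactly when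
`W_{k+1} = A_k W_k` for the atomic matrix `A_k` whose last row carries the coefficients; conversely
multiplying a window by an atomic matrix appends one such row. Hence `W_n = A_{n-1} ⋯ A_0 W_0`, and
`W_0 = W_n = I` says precisely that the product of the `n` atomic matrices is `I`.
-/

open Finset

section Window

variable {α : Type*} {r : ℕ}

def window (v : ℕ → Fin r → α) (k : ℕ) : Matrix (Fin r) (Fin r) α :=
  Matrix.of fun i => v (k + i)

@[simp] lemma window_apply (v : ℕ → Fin r → α) (k : ℕ) (i : Fin r) :
    window v k i = v (k + i) := rfl

lemma window_update_of_le (v : ℕ → Fin r → α) {j k : ℕ} (h : j ≤ k) (x : Fin r → α) :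
    window (Function.update v (k + r) x) j = window v j := by
  ext i l
  simp [Function.update_of_ne (show j + i ≠ k + r by omega)]

lemma window_update_succ_eq_iff (hr : 0 < r) (v : ℕ → Fin r → α) (k : ℕ) (x : Fin r → α) :
    window (Function.update v (k + r) x) (k + 1) = window v (k + 1) ↔ x = v (k + r) := by
  constructor
  · intro h
    have hlast := congrFun h ⟨r - 1, by omega⟩
    rwa [window_apply, window_apply, show k + 1 + (r - 1) = k + r by omega,
      Function.update_self] at hlast
  · rintro rfl
    rw [Function.update_eq_self]

end Window

lemma sum_filter_range_sub_mem {M : Type*} [AddCommMonoid M] {R : Finset ℕ} {r : ℕ}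
    (hmax : ∀ d ∈ R, d ≤ r) (hpos : ∀ d ∈ R, 0 < d) (f : ℕ → M) :
    ∑ l ∈ (range r).filter (fun l => r - l ∈ R), f l = ∑ d ∈ R, f (r - d) := by
  have hsub : ∀ d ∈ R, r - (r - d) = d := fun d hd => by have := hmax d hd; omega
  refine sum_nbij' (r - ·) (r - ·) (fun l hl => (mem_filter.1 hl).2) (fun d hd => ?_)
    (fun l hl => by simp only [mem_filter, mem_range] at hl; omega) hsub
    (fun l hl => by simp only [mem_filter, mem_range] at hl; rw [Nat.sub_sub_self hl.1.le])
  have := hpos d hd; have := hmax d hd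
  simp only [mem_filter, mem_range, hsub d hd]
  exact ⟨by omega, hd⟩

section Atomic

variable {α : Type*} {R : Finset ℕ} {r : ℕ}

/-- `lam d` plays the role of the paper's `α_d`: it sits in column `r - d` of the last row. -/
def atomicMat [Zero α] [One α] (R : Finset ℕ) (r : ℕ) (lam : ℕ → α) :
    Matrix (Fin r) (Fin r) α :=
  Matrix.of fun i j =>
    if (i : ℕ) + 1 < r then (if (j : ℕ) = i + 1 then 1 else 0)
    else if r - (j : ℕ) ∈ R then lam (r - j) else 0

lemma isAtomicMat_iff_exists_eq_atomicMat {s : ℕ} (A : Matrix (Fin r) (Fin r) (ZMod s)) :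
    IsAtomicMat R r s A ↔ ∃ lam : ℕ → ZMod s, A = atomicMat R r lam := by
  constructor
  · intro hA
    refine ⟨fun d => if h : 0 < d ∧ d ≤ r then A ⟨r - 1, by omega⟩ ⟨r - d, by omega⟩ else 0, ?_⟩
    ext i j
    have hj := j.isLt
    by_cases hi : (i : ℕ) + 1 < r
    · simp [atomicMat, hi, (hA i j).1 hi]
    · by_cases hR : r - (j : ℕ) ∈ R
      · obtain rfl : i = ⟨r - 1, Nat.sub_one_lt j.pos.ne'⟩ :=
          Fin.ext (show (i : ℕ) = r - 1 by omega)
        simp only [atomicMat, Matrix.of_apply, if_neg hi, if_pos hR,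
          dif_pos (show 0 < r - (j : ℕ) ∧ r - (j : ℕ) ≤ r by omega), Nat.sub_sub_self hj.le]
      · simp [atomicMat, hi, hR, (hA i j).2 (by omega) hR]
  · rintro ⟨lam, rfl⟩ i j
    exact ⟨fun hi => by simp [atomicMat, hi],
      fun hi hR => by simp [atomicMat, show ¬ (i : ℕ) + 1 < r by omega, hR]⟩

lemma atomicMat_mul_window [Semiring α] (hmax : ∀ d ∈ R, d ≤ r) (hpos : ∀ d ∈ R, 0 < d)
    (lam : ℕ → α) (v : ℕ → Fin r → α) (k : ℕ) :
    atomicMat R r lam * window v k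
      = window (Function.update v (k + r) (∑ d ∈ R, lam d • v (k + r - d))) (k + 1) := by
  ext i j
  by_cases hi : (i : ℕ) + 1 < r
  · rw [window_apply, Function.update_of_ne (by omega), Matrix.mul_apply]
    simp only [atomicMat, Matrix.of_apply, if_pos hi, window_apply, ite_mul, one_mul, zero_mul]
    rw [Fin.sum_univ_eq_sum_range (fun l => if l = (i : ℕ) + 1 then v (k + l) j else 0),
      sum_ite_eq', if_pos (mem_range.2 hi), add_right_comm, add_assoc]
  · rw [window_apply, show k + 1 + i = k + r by omega, Function.update_self, Matrix.mul_apply]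
    simp only [atomicMat, Matrix.of_apply, if_neg hi, window_apply, ite_mul, zero_mul]
    rw [Fin.sum_univ_eq_sum_range (fun l => if r - l ∈ R then lam (r - l) * v (k + l) j else 0),
      ← sum_filter, sum_filter_range_sub_mem hmax hpos, Finset.sum_apply]
    refine sum_congr rfl fun d hd => ?_
    have := hmax d hd
    rw [Nat.sub_sub_self this, Pi.smul_apply, smul_eq_mul, Nat.add_sub_assoc this]

end Atomic

lemma prod_reverse_map_range_mul_eq {M : Type*} [Monoid M] {n : ℕ} (A W : ℕ → M)
    (h : ∀ k < n, A k * W k = W (k + 1)) : ((List.range n).map A).reverse.prod * W 0 = W n := by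
  suffices ∀ k ≤ n, ((List.range k).map A).reverse.prod * W 0 = W k from this n le_rfl
  intro k hk
  induction k with
  | zero => simp
  | succ k ih =>
    rw [List.range_succ, List.map_append, List.reverse_append, List.prod_append]
    simp [mul_assoc, ih (by omega), h k (by omega)]

section Solvability

variable {R : Finset ℕ} {r s : ℕ}

lemma exists_atomic_mul_window_iff (hr : 0 < r) (hmax : ∀ d ∈ R, d ≤ r)
    (hpos : ∀ d ∈ R, 0 < d) (v : ℕ → Fin r → ZMod s) (k : ℕ) :
    (∃ A, IsAtomicMat R r s A ∧ A * window v k = window v (k + 1)) ↔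
      ∃ lam : ℕ → ZMod s, v (k + r) = ∑ d ∈ R, lam d • v (k + r - d) := by
  simp only [isAtomicMat_iff_exists_eq_atomicMat]
  constructor
  · rintro ⟨_, ⟨lam, rfl⟩, h⟩
    rw [atomicMat_mul_window hmax hpos, window_update_succ_eq_iff hr] at h
    exact ⟨lam, h.symm⟩
  · rintro ⟨lam, h⟩
    refine ⟨_, ⟨lam, rfl⟩, ?_⟩
    rw [atomicMat_mul_window hmax hpos, window_update_succ_eq_iff hr, h]

lemma linearlySolvable_iff_exists_window {n : ℕ} :
    LinearlySolvable R r n s ↔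
      ∃ v : ℕ → Fin r → ZMod s, window v 0 = 1 ∧ window v n = 1 ∧
        ∀ k < n, ∃ lam : ℕ → ZMod s, v (k + r) = ∑ d ∈ R, lam d • v (k + r - d) := by
  constructor
  · rintro ⟨M, ⟨hfirst, hrec⟩, hlast⟩
    refine ⟨fun m => if h : m < n + r then M ⟨m, h⟩ else 0, ?_, ?_, fun k hk => ?_⟩
    · ext i j
      simpa [Matrix.one_apply, show (i : ℕ) < n + r by omega] using hfirst i j
    · ext i j
      simpa [Matrix.one_apply] using hlast i j
    · obtain ⟨lam, hlam⟩ := hrec (k + r) (by omega) (by omega)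
      refine ⟨lam, funext fun j => ?_⟩
      simp only [dif_pos (show k + r < n + r by omega), hlam j, Finset.sum_apply]
      exact sum_congr rfl fun d _ => by simp [dif_pos (show k + r - d < n + r by omega)]
  · rintro ⟨v, hfirst, hlast, hrec⟩
    refine ⟨Matrix.of fun m => v m, ⟨fun i j => ?_, fun k hk₁ hk₂ => ?_⟩, fun i j => ?_⟩
    · simpa [Matrix.one_apply] using congrFun (congrFun hfirst i) j
    · obtain ⟨k, rfl⟩ := Nat.exists_eq_add_of_le' hk₁
      obtain ⟨lam, hlam⟩ := hrec k (by omega)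
      exact ⟨lam, fun j => by simpa using congrFun hlam j⟩
    · simpa [Matrix.one_apply] using congrFun (congrFun hlast i) j

lemma exists_window_of_forall_isAtomicMat (hmax : ∀ d ∈ R, d ≤ r) (hpos : ∀ d ∈ R, 0 < d)
    (L : List (Matrix (Fin r) (Fin r) (ZMod s))) (hL : ∀ A ∈ L, IsAtomicMat R r s A) :
    ∃ v : ℕ → Fin r → ZMod s, window v 0 = 1 ∧ window v L.length = L.prod ∧
      ∀ k < L.length, ∃ A, IsAtomicMat R r s A ∧ A * window v k = window v (k + 1) := by
  induction L with
  | nil =>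
    refine ⟨fun m j => if m = j then 1 else 0, ?_, ?_, by simp⟩ <;>
      ext i j <;> simp [Matrix.one_apply, Fin.ext_iff]
  | cons A T ih =>
    obtain ⟨v, hfirst, hlast, hsteps⟩ := ih fun B hB => hL B (List.mem_cons_of_mem A hB)
    have hA := hL A List.mem_cons_self
    obtain ⟨lam, rfl⟩ := (isAtomicMat_iff_exists_eq_atomicMat _).1 hA
    set v' := Function.update v (T.length + r) (∑ d ∈ R, lam d • v (T.length + r - d))
    have hkeep : ∀ k ≤ T.length, window v' k = window v k := fun k hk =>
      window_update_of_le v hk _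
    have hnew : atomicMat R r lam * window v' T.length = window v' (T.length + 1) := by
      rw [hkeep _ le_rfl, atomicMat_mul_window hmax hpos]
    refine ⟨v', (hkeep 0 (Nat.zero_le _)).trans hfirst, ?_, fun k hk => ?_⟩
    · rw [List.length_cons, ← hnew, hkeep _ le_rfl, hlast, List.prod_cons]
    · rcases Nat.lt_succ_iff_lt_or_eq.1 hk with hk | rfl
      · rw [hkeep k hk.le, hkeep (k + 1) hk]
        exact hsteps k hk
      · exact ⟨_, hA, hnew⟩

end Solvability

theorem linearlySolvable_iff_identity_prod_atomic_general (R : Finset ℕ) (r n s : ℕ)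
    (hrR : r ∈ R) (hmax : ∀ j ∈ R, j ≤ r) (hpos : ∀ j ∈ R, 0 < j) :
    LinearlySolvable R r n s ↔
      ∃ L : List (Matrix (Fin r) (Fin r) (ZMod s)),
        L.length = n ∧ (∀ A ∈ L, IsAtomicMat R r s A) ∧ L.prod = 1 := by
  simp_rw [linearlySolvable_iff_exists_window,
    ← exists_atomic_mul_window_iff (hpos r hrR) hmax hpos]
  constructor
  · rintro ⟨v, hfirst, hlast, hsteps⟩
    choose! A hA hAv using hsteps
    refine ⟨((List.range n).map A).reverse, by simp, fun B hB => ?_, ?_⟩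
    · obtain ⟨k, hk, rfl⟩ := List.mem_map.1 (List.mem_reverse.1 hB)
      exact hA k (List.mem_range.1 hk)
    · simpa [hfirst, hlast] using prod_reverse_map_range_mul_eq A (window v) hAv
  · rintro ⟨L, rfl, hL, hprod⟩
    obtain ⟨v, hfirst, hlast, hsteps⟩ := exists_window_of_forall_isAtomicMat hmax hpos L hL
    exact ⟨v, hfirst, hlast.trans hprod, hsteps⟩

/-- The clock network `N_n(R)` is linearly `s`-solvable if and only if the `r × r`
identity matrix over `ℤ_s` is a product of exactly `n` `R`-atomic matrices. -/
theorem linearlySolvable_iff_identity_prod_atomic (R : Finset ℕ) (r n s : ℕ)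
    (hrR : r ∈ R) (hmax : ∀ j ∈ R, j ≤ r) (hpos : ∀ j ∈ R, 0 < j)
    (hn : r ≤ n) (hs : 2 ≤ s) :
    LinearlySolvable R r n s ↔
      ∃ L : List (Matrix (Fin r) (Fin r) (ZMod s)),
        L.length = n ∧ (∀ A ∈ L, IsAtomicMat R r s A) ∧ L.prod = 1 :=
  linearlySolvable_iff_identity_prod_atomic_general R r n s hrR hmax hpos
end

section
/- For every integer n ≥ 12 and every integer s ≥ 2, the clock network N_n({1,3}) is linearly s-solvable; that is, there exists an (n+3)×3 matrix over ℤ_s whose first three rows form I_3, whose last three rows (rows n+1, n+2, n+3) form I_3, and in which every row k with 3 < k ≤ n+3 is a ℤ_s-linear combination of rows k−1 and k−3. -/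
/-! ### Auxiliary construction -/

/-- A triple of integers, representing a row of the circuit matrix. -/
abbrev CVec := ℤ × ℤ × ℤ

/-- One step of the {1,3}-recurrence on a window of three consecutive rows. -/
def cstp (p : ℤ × ℤ) (t : CVec × CVec × CVec) : CVec × CVec × CVec :=
  (t.2.1, t.2.2,
    (p.1 * t.1.1 + p.2 * t.2.2.1,
     p.1 * t.1.2.1 + p.2 * t.2.2.2.1,
     p.1 * t.1.2.2 + p.2 * t.2.2.2.2))

/-- The sequence of windows `(r_k, r_{k+1}, r_{k+2})`. -/
def cseq (c : ℕ → ℤ × ℤ) : ℕ → CVec × CVec × CVec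
  | 0 => ((1, 0, 0), (0, 1, 0), (0, 0, 1))
  | j + 1 => cstp (c j) (cseq c j)

/-- The `k`-th row. -/
def crow (c : ℕ → ℤ × ℤ) (k : ℕ) : CVec := (cseq c k).1

lemma crow_two (c : ℕ → ℤ × ℤ) (k : ℕ) : crow c (k + 2) = (cseq c k).2.2 := rfl

lemma crow_rec (c : ℕ → ℤ × ℤ) (k : ℕ) :
    crow c (k + 3) =
      ((c k).1 * (crow c k).1 + (c k).2 * (crow c (k + 2)).1,
       (c k).1 * (crow c k).2.1 + (c k).2 * (crow c (k + 2)).2.1,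
       (c k).1 * (crow c k).2.2 + (c k).2 * (crow c (k + 2)).2.2) := rfl

/-- Component `j` of a row. -/
def ccomp (v : CVec) (j : Fin 3) : ℤ :=
  if j.val = 0 then v.1 else if j.val = 1 then v.2.1 else v.2.2

lemma ccomp_rec (c : ℕ → ℤ × ℤ) (k : ℕ) (j : Fin 3) :
    ccomp (crow c (k + 3)) j
      = (c k).1 * ccomp (crow c k) j + (c k).2 * ccomp (crow c (k + 2)) j := by
  unfold ccomp
  split_ifs <;> simp only [crow_rec]

lemma cseq_add_three (c : ℕ → ℤ × ℤ) (k : ℕ)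
    (h0 : c k = (1, 0)) (h1 : c (k + 1) = (1, 0)) (h2 : c (k + 2) = (1, 0)) :
    cseq c (k + 3) = cseq c k := by
  show cstp (c (k + 2)) (cstp (c (k + 1)) (cstp (c k) (cseq c k))) = cseq c k
  rw [h0, h1, h2]
  simp [cstp]

lemma cseq_periodic (c : ℕ → ℤ × ℤ) (m : ℕ)
    (hc : ∀ j, m ≤ j → c j = (1, 0)) (t : ℕ) :
    cseq c (m + 3 * t) = cseq c m := by
  induction t with
  | zero => rfl
  | succ t ih =>
      have h : m + 3 * (t + 1) = (m + 3 * t) + 3 := by ring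
      rw [h, cseq_add_three c (m + 3 * t) (hc _ (by omega)) (hc _ (by omega))
        (hc _ (by omega)), ih]

/-- Master lemma: if a list of coefficients brings the window back to the initial
identity window, then for any `n` equal to the list length plus a multiple of `3`,
the network is linearly solvable. -/
lemma master (n s : ℕ) (L : List (ℤ × ℤ))
    (hm : cseq (fun j => L.getD j (1, 0)) L.length
        = ((1, 0, 0), (0, 1, 0), (0, 0, 1)))
    (t : ℕ) (hn : n = L.length + 3 * t) :
    LinearlySolvable {1, 3} 3 n s := by
  set c : ℕ → ℤ × ℤ := fun j => L.getD j (1, 0) with hc_def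
  have hc : ∀ j, L.length ≤ j → c j = (1, 0) := by
    intro j hj
    simp only [hc_def]
    exact List.getD_eq_default _ _ hj
  have hper : cseq c n = ((1, 0, 0), (0, 1, 0), (0, 0, 1)) := by
    rw [hn, cseq_periodic c L.length hc t, hm]
  refine ⟨fun i j => ((ccomp (crow c i.val) j : ℤ) : ZMod s), ⟨?_, ?_⟩, ?_⟩
  · intro i j
    fin_cases i <;> fin_cases j <;>
      simp [ccomp, crow, cseq, cstp]
  · intro k hk3 hklt
    obtain ⟨k', rfl⟩ : ∃ k', k = k' + 3 := ⟨k - 3, by omega⟩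
    refine ⟨fun d => if d = 3 then ((c k').1 : ZMod s) else ((c k').2 : ZMod s), ?_⟩
    intro j
    have hsum : ∀ f : ℕ → ZMod s, ∑ d ∈ ({1, 3} : Finset ℕ), f d = f 1 + f 3 := by
      intro f
      rw [Finset.sum_pair (by norm_num)]
    rw [hsum]
    have e1 : k' + 3 - 1 = k' + 2 := rfl
    have e3 : k' + 3 - 3 = k' := by omega
    simp only [e1, e3]
    rw [if_neg (by norm_num : (1 : ℕ) ≠ 3)]
    simp only [if_true]
    rw [ccomp_rec]
    push_cast
    ring
  · intro i j
    have h0 : crow c n = (1, 0, 0) := by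
      show (cseq c n).1 = _
      rw [hper]
    have h1 : crow c (n + 1) = (0, 1, 0) := by
      show (cseq c n).2.1 = _
      rw [hper]
    have h2 : crow c (n + 2) = (0, 0, 1) := by
      show (cseq c n).2.2 = _
      rw [hper]
    fin_cases i <;> fin_cases j <;>
      simp [ccomp, h0, h1, h2]

/-- For every `n ≥ 12` and `s ≥ 2`, the clock network `N_n({1,3})` is linearly
`s`-solvable. -/
theorem clock13_linearlySolvable (n s : ℕ) (hn : 12 ≤ n) (hs : 2 ≤ s) :
    LinearlySolvable {1, 3} 3 n s := by
  have h3 : n % 3 = 0 ∨ n % 3 = 1 ∨ n % 3 = 2 := by omega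
  rcases h3 with h | h | h
  · exact master n s [] (by decide) (n / 3) (by simp; omega)
  · exact master n s
      [(-1, -2), (-1, 0), (-1, -1), (-1, 1), (-1, -1),
       (-1, 1), (-1, -1), (-1, 1), (-1, -1), (-1, 0)]
      (by decide) ((n - 10) / 3) (by simp; omega)
  · exact master n s
      [(-1, -1), (-1, -1), (-1, -1), (-1, -1), (-1, 1), (-1, 0), (-1, 1),
       (-1, -1), (-1, -1), (-1, 1), (-1, -1), (-1, -1), (1, 0), (1, 1)]
      (by decide) ((n - 14) / 3) (by simp; omega)
end

section
/- The clock network N_8({1,3}) is linearly 3-solvable; that is, there exists an 11×3 matrix over ℤ_3 whose first three rows form I_3, whose last three rows (rows 9, 10, 11) form I_3, and in which every row k with 4 ≤ k ≤ 11 is a ℤ_3-linear combination of rows k−1 and k−3. -/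
open Polynomial

section Recurrence

variable {A : Type*} [CommRing A]

noncomputable def recurrencePoly (R : Finset ℕ) (r : ℕ) (c : ℕ → A) : A[X] :=
  X ^ r - ∑ d ∈ R, c d • X ^ (r - d)

variable {R : Finset ℕ} {r : ℕ} (c : ℕ → A)

theorem degree_sum_smul_X_pow_lt (hR : ∀ d ∈ R, 0 < d ∧ d ≤ r) :
    degree (∑ d ∈ R, c d • (X : A[X]) ^ (r - d)) < r := by
  rw [← mem_degreeLT]
  refine Submodule.sum_mem _ fun d hd => Submodule.smul_mem _ _ ?_
  rw [mem_degreeLT]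
  have := hR d hd
  exact (degree_X_pow_le _).trans_lt (by exact_mod_cast (by omega : r - d < r))

theorem recurrencePoly_monic (hR : ∀ d ∈ R, 0 < d ∧ d ≤ r) : (recurrencePoly R r c).Monic :=
  monic_X_pow_sub (degree_sum_smul_X_pow_lt c hR)

theorem degree_recurrencePoly [Nontrivial A] (hR : ∀ d ∈ R, 0 < d ∧ d ≤ r) :
    (recurrencePoly R r c).degree = r := by
  rw [recurrencePoly, degree_sub_eq_left_of_degree_lt] <;> rw [degree_X_pow]
  exact degree_sum_smul_X_pow_lt c hR

theorem X_pow_modByMonic_recurrencePoly_of_lt [Nontrivial A] (hR : ∀ d ∈ R, 0 < d ∧ d ≤ r)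
    {k : ℕ} (hk : k < r) : X ^ k %ₘ recurrencePoly R r c = X ^ k := by
  rw [modByMonic_eq_self_iff (recurrencePoly_monic c hR), degree_recurrencePoly c hR]
  exact (degree_X_pow_le k).trans_lt (by exact_mod_cast hk)

theorem X_pow_modByMonic_recurrencePoly_of_le (hR : ∀ d ∈ R, 0 < d ∧ d ≤ r) {k : ℕ}
    (hk : r ≤ k) :
    X ^ k %ₘ recurrencePoly R r c = ∑ d ∈ R, c d • (X ^ (k - d) %ₘ recurrencePoly R r c) := by
  have hdvd : recurrencePoly R r c ∣ X ^ k - ∑ d ∈ R, c d • X ^ (k - d) := by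
    refine ⟨X ^ (k - r), ?_⟩
    rw [recurrencePoly, sub_mul, Finset.sum_mul, ← pow_add, Nat.add_sub_cancel' hk]
    congr 1
    refine Finset.sum_congr rfl fun d hd => ?_
    have := hR d hd
    rw [smul_mul_assoc, ← pow_add]
    congr 2
    omega
  rw [modByMonic_eq_of_dvd_sub (recurrencePoly_monic c hR) hdvd, ← modByMonicHom_apply, map_sum]
  simp only [map_smul, modByMonicHom_apply]

end Recurrence

noncomputable def remainderMatrix {A : Type*} [CommRing A] (f : A[X]) (n r : ℕ) :
    Matrix (Fin (n + r)) (Fin r) A :=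
  Matrix.of fun k j => (X ^ (k : ℕ) %ₘ f).coeff j

section ZMod

variable {R : Finset ℕ} {r n s : ℕ} [Nontrivial (ZMod s)]

theorem isCircuitMatrix_remainderMatrix (hR : ∀ d ∈ R, 0 < d ∧ d ≤ r) (c : ℕ → ZMod s) :
    IsCircuitMatrix R r n s (remainderMatrix (recurrencePoly R r c) n r) := by
  refine ⟨fun i j => ?_, fun k hk hkn => ⟨c, fun j => ?_⟩⟩
  · simp [remainderMatrix, X_pow_modByMonic_recurrencePoly_of_lt c hR i.isLt, coeff_X_pow,
      Fin.val_inj, eq_comm]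
  · simp [remainderMatrix, X_pow_modByMonic_recurrencePoly_of_le c hR hk]

theorem linearlySolvable_of_recurrencePoly_dvd (hR : ∀ d ∈ R, 0 < d ∧ d ≤ r) (c : ℕ → ZMod s)
    (hdvd : recurrencePoly R r c ∣ X ^ n - 1) : LinearlySolvable R r n s := by
  refine ⟨_, isCircuitMatrix_remainderMatrix hR c, fun i j => ?_⟩
  have hperiod : X ^ (n + i : ℕ) %ₘ recurrencePoly R r c = X ^ (i : ℕ) :=
    calc X ^ (n + i : ℕ) %ₘ recurrencePoly R r c = X ^ (i : ℕ) %ₘ recurrencePoly R r c :=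
          modByMonic_eq_of_dvd_sub (recurrencePoly_monic c hR)
            (hdvd.trans ⟨X ^ (i : ℕ), by ring⟩)
      _ = X ^ (i : ℕ) := X_pow_modByMonic_recurrencePoly_of_lt c hR i.isLt
  simp [remainderMatrix, hperiod, coeff_X_pow, Fin.val_inj, eq_comm]

end ZMod

theorem recurrencePoly_one_three_dvd_X_pow_eight_sub_one :
    recurrencePoly {1, 3} 3 (fun _ => (1 : ZMod 3)) ∣ X ^ 8 - 1 := by
  have h3 : (3 : (ZMod 3)[X]) = 0 := by
    rw [← C_ofNat]
    exact C_eq_zero.2 rfl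
  refine ⟨X ^ 5 + X ^ 4 + X ^ 3 + 2 * X ^ 2 + 1, ?_⟩
  simp only [recurrencePoly, Finset.sum_insert (by decide : (1 : ℕ) ∉ ({3} : Finset ℕ)),
    Finset.sum_singleton, one_smul]
  linear_combination (X ^ 4 + X ^ 2) * h3

/-- The clock network `N_8({1,3})` is linearly `3`-solvable. -/
theorem clock13_eight_linearlySolvable_three : LinearlySolvable {1, 3} 3 8 3 :=
  linearlySolvable_of_recurrencePoly_dvd (by decide) _
    recurrencePoly_one_three_dvd_X_pow_eight_sub_one
end

section
/- The clock network N_7({1,3}) is not linearly 3-solvable; that is, there is no 10×3 matrix over ℤ_3 whose first three rows form I_3, whose last three rows (rows 8, 9, 10) form I_3, and in which every row k with 4 ≤ k ≤ 10 is a ℤ_3-linear combination of rows k−1 and k−3. -/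
private lemma clock13_key (a3 a4 a5 a6 a7 a8 a9 b3 b4 b5 b6 b7 b8 b9
    x0 y0 z0 x1 y1 z1 x2 y2 z2 x3 y3 z3 x4 y4 z4 x5 y5 z5
    x6 y6 z6 x7 y7 z7 x8 y8 z8 x9 y9 z9 : ZMod 3)
    (h0 : x0 = 1) (h0' : y0 = 0) (h0'' : z0 = 0)
    (h1 : x1 = 0) (h1' : y1 = 1) (h1'' : z1 = 0)
    (h2 : x2 = 0) (h2' : y2 = 0) (h2'' : z2 = 1)
    (h7 : x7 = 1) (h7' : y7 = 0) (h7'' : z7 = 0)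
    (h8 : x8 = 0) (h8' : y8 = 1) (h8'' : z8 = 0)
    (h9 : x9 = 0) (h9' : y9 = 0) (h9'' : z9 = 1)
    (e3 : x3 = a3 * x2 + b3 * x0) (e3' : y3 = a3 * y2 + b3 * y0) (e3'' : z3 = a3 * z2 + b3 * z0)
    (e4 : x4 = a4 * x3 + b4 * x1) (e4' : y4 = a4 * y3 + b4 * y1) (e4'' : z4 = a4 * z3 + b4 * z1)
    (e5 : x5 = a5 * x4 + b5 * x2) (e5' : y5 = a5 * y4 + b5 * y2) (e5'' : z5 = a5 * z4 + b5 * z2)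
    (e6 : x6 = a6 * x5 + b6 * x3) (e6' : y6 = a6 * y5 + b6 * y3) (e6'' : z6 = a6 * z5 + b6 * z3)
    (e7 : x7 = a7 * x6 + b7 * x4) (e7' : y7 = a7 * y6 + b7 * y4) (e7'' : z7 = a7 * z6 + b7 * z4)
    (e8 : x8 = a8 * x7 + b8 * x5) (e8' : y8 = a8 * y7 + b8 * y5) (e8'' : z8 = a8 * z7 + b8 * z5)
    (e9 : x9 = a9 * x8 + b9 * x6) (e9' : y9 = a9 * y8 + b9 * y6) (e9'' : z9 = a9 * z8 + b9 * z6) :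
    False := by
  have mz : ∀ x y : ZMod 3, x * y = 0 → x = 0 ∨ y = 0 := by decide
  have hL : ∀ u x : ZMod 3, u * x = 1 → u ≠ 0 := by decide
  have hR : ∀ u x : ZMod 3, u * x = 1 → x ≠ 0 := by decide
  have mnz : ∀ x y : ZMod 3, x ≠ 0 → y ≠ 0 → x * y ≠ 0 := by decide
  subst h0 h0' h0'' h1 h1' h1'' h2 h2' h2'' h7 h7' h7'' h8 h8' h8'' h9 h9' h9''
  subst e3 e3' e3'' e4 e4' e4'' e5 e5' e5'' e6 e6' e6''
  have c8y : b8 * (a5 * b4) = 1 := by linear_combination -e8'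
  have c8z : b8 * (a5 * (a4 * a3) + b5) = 0 := by linear_combination -e8''
  have c9x : b9 * (a6 * (a5 * (a4 * b3)) + b6 * b3) = 0 := by linear_combination -e9
  have c9z : b9 * (a6 * (a5 * (a4 * a3) + b5) + b6 * a3) = 1 := by linear_combination -e9''
  have c7x : a7 * (a6 * (a5 * (a4 * b3)) + b6 * b3) + b7 * (a4 * b3) = 1 := by
    linear_combination -e7
  have c7y : a7 * (a6 * (a5 * b4)) + b7 * b4 = 0 := by linear_combination -e7'
  have c7z : a7 * (a6 * (a5 * (a4 * a3) + b5) + b6 * a3) + b7 * (a4 * a3) = 0 := by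
    linear_combination -e7''
  have hb8 : b8 ≠ 0 := hL _ _ c8y
  have ha5 : a5 ≠ 0 := hR _ _ (show b8 * b4 * a5 = 1 by linear_combination c8y)
  have hb4 : b4 ≠ 0 := hR _ _ (show b8 * a5 * b4 = 1 by linear_combination c8y)
  have hX : a5 * (a4 * a3) + b5 = 0 := (mz _ _ c8z).resolve_left hb8
  have hb9 : b9 ≠ 0 := hL _ _ c9z
  have d9z : b9 * (b6 * a3) = 1 := by linear_combination c9z - b9 * a6 * hX
  have hb6 : b6 ≠ 0 := hR _ _ (show b9 * a3 * b6 = 1 by linear_combination d9z)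
  have ha3 : a3 ≠ 0 := hR _ _ (show b9 * b6 * a3 = 1 by linear_combination d9z)
  have h6x0 : a6 * (a5 * (a4 * b3)) + b6 * b3 = 0 := (mz _ _ c9x).resolve_left hb9
  have d7x : b7 * (a4 * b3) = 1 := by linear_combination c7x - a7 * h6x0
  have hb7 : b7 ≠ 0 := hL _ _ d7x
  have ha4 : a4 ≠ 0 := hR _ _ (show b7 * b3 * a4 = 1 by linear_combination d7x)
  have hb3 : b3 ≠ 0 := hR _ _ (show b7 * a4 * b3 = 1 by linear_combination d7x)
  have h6c : a6 * (a5 * a4) + b6 = 0 := by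
    have h' : (a6 * (a5 * a4) + b6) * b3 = 0 := by linear_combination h6x0
    exact (mz _ _ h').resolve_right hb3
  have ha6 : a6 ≠ 0 := fun h => hb6 (by linear_combination h6c - (a5 * a4) * h)
  have h7c : a7 * (a6 * a5) + b7 = 0 := by
    have h' : (a7 * (a6 * a5) + b7) * b4 = 0 := by linear_combination c7y
    exact (mz _ _ h').resolve_right hb4
  have ha7 : a7 ≠ 0 := fun h => hb7 (by linear_combination h7c - (a6 * a5) * h)
  have hp2 : 2 * (a7 * (a6 * (a5 * (a4 * a3)))) = 0 := by
    linear_combination -c7z + (a7 * a6) * hX + (a7 * a3) * h6c + (a4 * a3) * h7c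
  have hp : a7 * (a6 * (a5 * (a4 * a3))) = 0 :=
    (mz _ _ hp2).resolve_left (by decide)
  exact mnz _ _ ha7 (mnz _ _ ha6 (mnz _ _ ha5 (mnz _ _ ha4 ha3))) hp

/-- The clock network `N_7({1,3})` is not linearly `3`-solvable. -/
theorem clock13_seven_not_linearlySolvable_three : ¬ LinearlySolvable {1, 3} 3 7 3 := by
  rintro ⟨M, ⟨hfirst, hrec⟩, hlast⟩
  have hpair : ∀ (f : ℕ → ZMod 3), (∑ d ∈ ({1, 3} : Finset ℕ), f d) = f 1 + f 3 :=
    fun f => Finset.sum_pair (by norm_num)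
  obtain ⟨l3, h3⟩ := hrec 3 (by norm_num) (by norm_num)
  obtain ⟨l4, h4⟩ := hrec 4 (by norm_num) (by norm_num)
  obtain ⟨l5, h5⟩ := hrec 5 (by norm_num) (by norm_num)
  obtain ⟨l6, h6⟩ := hrec 6 (by norm_num) (by norm_num)
  obtain ⟨l7, h7⟩ := hrec 7 (by norm_num) (by norm_num)
  obtain ⟨l8, h8⟩ := hrec 8 (by norm_num) (by norm_num)
  obtain ⟨l9, h9⟩ := hrec 9 (by norm_num) (by norm_num)
  have E : ∀ (k : ℕ) (hk3 : 3 ≤ k) (hk : k < 7 + 3) (l : ℕ → ZMod 3)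
      (h : ∀ j : Fin 3, M ⟨k, hk⟩ j = ∑ d ∈ ({1,3} : Finset ℕ), l d * M ⟨k - d, by omega⟩ j)
      (j : Fin 3),
      M ⟨k, hk⟩ j = l 1 * M ⟨k - 1, by omega⟩ j + l 3 * M ⟨k - 3, by omega⟩ j := by
    intro k hk3 hk l h j
    rw [h j, hpair]
  exact clock13_key (l3 1) (l4 1) (l5 1) (l6 1) (l7 1) (l8 1) (l9 1)
    (l3 3) (l4 3) (l5 3) (l6 3) (l7 3) (l8 3) (l9 3)
    (M ⟨0, by norm_num⟩ 0) (M ⟨0, by norm_num⟩ 1) (M ⟨0, by norm_num⟩ 2)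
    (M ⟨1, by norm_num⟩ 0) (M ⟨1, by norm_num⟩ 1) (M ⟨1, by norm_num⟩ 2)
    (M ⟨2, by norm_num⟩ 0) (M ⟨2, by norm_num⟩ 1) (M ⟨2, by norm_num⟩ 2)
    (M ⟨3, by norm_num⟩ 0) (M ⟨3, by norm_num⟩ 1) (M ⟨3, by norm_num⟩ 2)
    (M ⟨4, by norm_num⟩ 0) (M ⟨4, by norm_num⟩ 1) (M ⟨4, by norm_num⟩ 2)
    (M ⟨5, by norm_num⟩ 0) (M ⟨5, by norm_num⟩ 1) (M ⟨5, by norm_num⟩ 2)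
    (M ⟨6, by norm_num⟩ 0) (M ⟨6, by norm_num⟩ 1) (M ⟨6, by norm_num⟩ 2)
    (M ⟨7, by norm_num⟩ 0) (M ⟨7, by norm_num⟩ 1) (M ⟨7, by norm_num⟩ 2)
    (M ⟨8, by norm_num⟩ 0) (M ⟨8, by norm_num⟩ 1) (M ⟨8, by norm_num⟩ 2)
    (M ⟨9, by norm_num⟩ 0) (M ⟨9, by norm_num⟩ 1) (M ⟨9, by norm_num⟩ 2)
    (by simpa using hfirst 0 0) (by simpa using hfirst 0 1) (by simpa using hfirst 0 2)
    (by simpa using hfirst 1 0) (by simpa using hfirst 1 1) (by simpa using hfirst 1 2)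
    (by simpa using hfirst 2 0) (by simpa using hfirst 2 1) (by simpa using hfirst 2 2)
    (by simpa using hlast 0 0) (by simpa using hlast 0 1) (by simpa using hlast 0 2)
    (by simpa using hlast 1 0) (by simpa using hlast 1 1) (by simpa using hlast 1 2)
    (by simpa using hlast 2 0) (by simpa using hlast 2 1) (by simpa using hlast 2 2)
    (E 3 (by norm_num) (by norm_num) l3 h3 0) (E 3 (by norm_num) (by norm_num) l3 h3 1)
    (E 3 (by norm_num) (by norm_num) l3 h3 2)
    (E 4 (by norm_num) (by norm_num) l4 h4 0) (E 4 (by norm_num) (by norm_num) l4 h4 1)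
    (E 4 (by norm_num) (by norm_num) l4 h4 2)
    (E 5 (by norm_num) (by norm_num) l5 h5 0) (E 5 (by norm_num) (by norm_num) l5 h5 1)
    (E 5 (by norm_num) (by norm_num) l5 h5 2)
    (E 6 (by norm_num) (by norm_num) l6 h6 0) (E 6 (by norm_num) (by norm_num) l6 h6 1)
    (E 6 (by norm_num) (by norm_num) l6 h6 2)
    (E 7 (by norm_num) (by norm_num) l7 h7 0) (E 7 (by norm_num) (by norm_num) l7 h7 1)
    (E 7 (by norm_num) (by norm_num) l7 h7 2)
    (E 8 (by norm_num) (by norm_num) l8 h8 0) (E 8 (by norm_num) (by norm_num) l8 h8 1)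
    (E 8 (by norm_num) (by norm_num) l8 h8 2)
    (E 9 (by norm_num) (by norm_num) l9 h9 0) (E 9 (by norm_num) (by norm_num) l9 h9 1)
    (E 9 (by norm_num) (by norm_num) l9 h9 2)
end

section
/- The clock network N_11({1,3}) is not 2-solvable; that is, there is no circuit (not necessarily linear) on N_11({1,3}) over ℤ_2 whose valuation satisfies (X_12, X_13, X_14) = c for every input c ∈ ℤ_2³. -/
set_option maxHeartbeats 4000000 in
theorem clock_key : ∀ a3 a4 a5 a6 a7 a8 a9 a10 a11 a12 a13 : ZMod 2,
    ∃ c0 c1 c2 : ZMod 2,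
      ¬ ((a11 * (a10 * (a9 * (a8 * (a7 * (a6 * (a5 * (a4 * (a3 * c2 + c0) + c1) + c2) + (a3 * c2 + c0)) + (a4 * (a3 * c2 + c0) + c1)) + (a5 * (a4 * (a3 * c2 + c0) + c1) + c2)) + (a6 * (a5 * (a4 * (a3 * c2 + c0) + c1) + c2) + (a3 * c2 + c0))) + (a7 * (a6 * (a5 * (a4 * (a3 * c2 + c0) + c1) + c2) + (a3 * c2 + c0)) + (a4 * (a3 * c2 + c0) + c1))) + (a8 * (a7 * (a6 * (a5 * (a4 * (a3 * c2 + c0) + c1) + c2) + (a3 * c2 + c0)) + (a4 * (a3 * c2 + c0) + c1)) + (a5 * (a4 * (a3 * c2 + c0) + c1) + c2))) = c0 ∧ (a12 * (a11 * (a10 * (a9 * (a8 * (a7 * (a6 * (a5 * (a4 * (a3 * c2 + c0) + c1) + c2) + (a3 * c2 + c0)) + (a4 * (a3 * c2 + c0) + c1)) + (a5 * (a4 * (a3 * c2 + c0) + c1) + c2)) + (a6 * (a5 * (a4 * (a3 * c2 + c0) + c1) + c2) + (a3 * c2 + c0))) + (a7 * (a6 * (a5 * (a4 * (a3 * c2 +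 c0) + c1) + c2) + (a3 * c2 + c0)) + (a4 * (a3 * c2 + c0) + c1))) + (a8 * (a7 * (a6 * (a5 * (a4 * (a3 * c2 + c0) + c1) + c2) + (a3 * c2 + c0)) + (a4 * (a3 * c2 + c0) + c1)) + (a5 * (a4 * (a3 * c2 + c0) + c1) + c2))) + (a9 * (a8 * (a7 * (a6 * (a5 * (a4 * (a3 * c2 + c0) + c1) + c2) + (a3 * c2 + c0)) + (a4 * (a3 * c2 + c0) + c1)) + (a5 * (a4 * (a3 * c2 + c0) + c1) + c2)) + (a6 * (a5 * (a4 * (a3 * c2 + c0) + c1) + c2) + (a3 * c2 + c0)))) = c1 ∧ (a13 * (a12 * (a11 * (a10 * (a9 * (a8 * (a7 * (a6 * (a5 * (a4 * (a3 * c2 + c0) + c1) + c2) + (a3 * c2 + c0)) + (a4 * (a3 * c2 + c0) + c1)) + (a5 * (a4 * (a3 * c2 + c0) + c1) + c2)) + (a6 * (a5 * (a4 * (a3 * c2 + c0) + c1) + c2) + (a3 * c2 + c0))) + (a7 * (a6 * (a5 * (a4 * (a3 * c2 + c0) + c1) + c2) + (a3 * c2 + c0)) + (a4 * (a3 * c2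 + c0) + c1))) + (a8 * (a7 * (a6 * (a5 * (a4 * (a3 * c2 + c0) + c1) + c2) + (a3 * c2 + c0)) + (a4 * (a3 * c2 + c0) + c1)) + (a5 * (a4 * (a3 * c2 + c0) + c1) + c2))) + (a9 * (a8 * (a7 * (a6 * (a5 * (a4 * (a3 * c2 + c0) + c1) + c2) + (a3 * c2 + c0)) + (a4 * (a3 * c2 + c0) + c1)) + (a5 * (a4 * (a3 * c2 + c0) + c1) + c2)) + (a6 * (a5 * (a4 * (a3 * c2 + c0) + c1) + c2) + (a3 * c2 + c0)))) + (a10 * (a9 * (a8 * (a7 * (a6 * (a5 * (a4 * (a3 * c2 + c0) + c1) + c2) + (a3 * c2 + c0)) + (a4 * (a3 * c2 + c0) + c1)) + (a5 * (a4 * (a3 * c2 + c0) + c1) + c2)) + (a6 * (a5 * (a4 * (a3 * c2 + c0) + c1) + c2) + (a3 * c2 + c0))) + (a7 * (a6 * (a5 * (a4 * (a3 * c2 + c0) + c1) + c2) + (a3 * c2 + c0)) + (a4 * (a3 * c2 + c0) + c1)))) = c2) := by decide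

/-- The valuation of the circuit given by gates `f` on input `c`. -/
def Xv (f : ℕ → ({ j // j ∈ ({1, 3} : Finset ℕ) } → ZMod 2) → ZMod 2)
    (c : Fin 3 → ZMod 2) : ℕ → ZMod 2
  | k =>
    if h : k < 3 then c ⟨k, h⟩
    else f k fun j => Xv f c (k - (j : ℕ))
termination_by k => k
decreasing_by
  have hj := j.2
  simp only [Finset.mem_insert, Finset.mem_singleton] at hj
  omega

/-- The gate at node `m` as a function of the two incoming values
(`a` from node `m-3`, `b` from node `m-1`). -/
def Fa (f : ℕ → ({ j // j ∈ ({1, 3} : Finset ℕ) } → ZMod 2) → ZMod 2)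
    (m : ℕ) (a b : ZMod 2) : ZMod 2 :=
  f m fun j => if (j : ℕ) = 1 then b else a

def Aa (f : ℕ → ({ j // j ∈ ({1, 3} : Finset ℕ) } → ZMod 2) → ZMod 2)
    (m : ℕ) : ZMod 2 :=
  Fa f m 0 1 + Fa f m 0 0

def Ba (f : ℕ → ({ j // j ∈ ({1, 3} : Finset ℕ) } → ZMod 2) → ZMod 2)
    (m : ℕ) : ZMod 2 :=
  Fa f m 0 0

/-- Difference of valuations on input `c` and input `0`. -/
def Dv (f : ℕ → ({ j // j ∈ ({1, 3} : Finset ℕ) } → ZMod 2) → ZMod 2)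
    (c : Fin 3 → ZMod 2) (m : ℕ) : ZMod 2 :=
  Xv f c m + Xv f (fun _ => 0) m



/-- The clock network `N_11({1,3})` is not `2`-solvable. -/
theorem clock13_eleven_not_solvable_two : ¬ Solvable {1, 3} 3 11 2 := by
  rintro ⟨f, hf⟩
  -- basic properties of the valuation
  have hXlt : ∀ (c : Fin 3 → ZMod 2) (i : ℕ) (h : i < 3), Xv f c i = c ⟨i, h⟩ := by
    intro c i h
    rw [Xv]
    rw [dif_pos h]
  have hXin : ∀ (c : Fin 3 → ZMod 2) (i : Fin 3), Xv f c (i : ℕ) = c i := by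
    intro c i
    rw [hXlt c i i.2]
  have hXrec : ∀ (c : Fin 3 → ZMod 2) (k : ℕ), 3 ≤ k →
      Xv f c k = f k fun j => Xv f c (k - (j : ℕ)) := by
    intro c k hk
    rw [Xv]
    rw [dif_neg (by omega)]
  have hout : ∀ (c : Fin 3 → ZMod 2) (i : Fin 3), Xv f c (11 + (i : ℕ)) = c i := by
    intro c i
    exact hf c (Xv f c) (fun i => hXin c i) (fun k hk _ => hXrec c k hk) i
  -- the step equation in terms of `Fa`
  have hstep : ∀ (c : Fin 3 → ZMod 2) (k : ℕ),
      Xv f c (k + 3) = Fa f (k + 3) (Xv f c k) (Xv f c (k + 2)) := by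
    intro c k
    have h : Xv f c (k + 3) = f (k + 3) fun j => Xv f c (k + 3 - (j : ℕ)) :=
      hXrec c (k + 3) (by omega)
    rw [h]
    show _ = f (k + 3) fun j => if (j : ℕ) = 1 then Xv f c (k + 2) else Xv f c k
    congr 1
    funext j
    have hj := j.2
    simp only [Finset.mem_insert, Finset.mem_singleton] at hj
    rcases hj with h1 | h3
    · rw [h1]
      show Xv f c (k + 3 - 1) = _
      norm_num
    · rw [h3]
      show Xv f c (k + 3 - 3) = _
      norm_num
  -- forward propagation: equal windows propagate to the output, forcing equal inputs
  have fwd : ∀ (j k : ℕ), k + j = 11 → ∀ c c' : Fin 3 → ZMod 2,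
      Xv f c k = Xv f c' k → Xv f c (k + 1) = Xv f c' (k + 1) →
      Xv f c (k + 2) = Xv f c' (k + 2) → c = c' := by
    intro j
    induction j with
    | zero =>
      intro k hk c c' h0 h1 h2
      have hk' : k = 11 := by omega
      subst hk'
      funext i
      rw [← hout c i, ← hout c' i]
      rcases i with ⟨iv, hiv⟩
      interval_cases iv
      · exact h0
      · exact h1
      · exact h2
    | succ j ih =>
      intro k hk c c' h0 h1 h2
      refine ih (k + 1) (by omega) c c' h1 h2 ?_
      show Xv f c (k + 3) = Xv f c' (k + 3)
      rw [hstep c k, hstep c' k, h0, h2]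
  -- every window up to time 11 is surjective
  have surj : ∀ k : ℕ, k ≤ 11 → ∀ t : ZMod 2 × ZMod 2 × ZMod 2,
      ∃ c : Fin 3 → ZMod 2, (Xv f c k, Xv f c (k + 1), Xv f c (k + 2)) = t := by
    intro k hk
    have hinj : Function.Injective
        (fun c : Fin 3 → ZMod 2 => (Xv f c k, Xv f c (k + 1), Xv f c (k + 2))) := by
      intro c c' h
      simp only [Prod.mk.injEq] at h
      exact fwd (11 - k) k (by omega) c c' h.1 h.2.1 h.2.2
    have hbij := (Fintype.bijective_iff_injective_and_card
      (fun c : Fin 3 → ZMod 2 => (Xv f c k, Xv f c (k + 1), Xv f c (k + 2)))).2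
        ⟨hinj, by simp⟩
    exact fun t => hbij.2 t
  -- each gate is injective in the delayed input, hence affine in it
  have two_cases : ∀ x : ZMod 2, x = 0 ∨ x = 1 := by decide
  have haff : ∀ k : ℕ, k ≤ 10 → ∀ (x av : ZMod 2),
      Fa f (k + 3) av x = Fa f (k + 3) 0 x + av := by
    intro k hk x av
    rcases two_cases av with rfl | rfl
    · rw [add_zero]
    · have hne : Fa f (k + 3) 1 x ≠ Fa f (k + 3) 0 x := by
        intro heq
        obtain ⟨c, hc⟩ := surj k (by omega) (0, 0, x)
        obtain ⟨c', hc'⟩ := surj k (by omega) (1, 0, x)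
        simp only [Prod.mk.injEq] at hc hc'
        obtain ⟨hc0, hc1, hc2⟩ := hc
        obtain ⟨hc0', hc1', hc2'⟩ := hc'
        have h3 : Xv f c (k + 3) = Xv f c' (k + 3) := by
          rw [hstep c k, hstep c' k, hc0, hc2, hc0', hc2', heq]
        have hcc : c = c' :=
          fwd (11 - (k + 1)) (k + 1) (by omega) c c'
            (hc1.trans hc1'.symm) (hc2.trans hc2'.symm) h3
        rw [hcc, hc0'] at hc0
        exact absurd hc0 (by decide)
      exact (show ∀ u v : ZMod 2, u ≠ v → u = v + 1 by decide) _ _ hne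
  have hFform : ∀ k : ℕ, k ≤ 10 → ∀ (av x : ZMod 2),
      Fa f (k + 3) av x = Ba f (k + 3) + Aa f (k + 3) * x + av := by
    intro k hk av x
    rw [haff k hk x av]
    congr 1
    rcases two_cases x with rfl | rfl
    · show Fa f (k + 3) 0 0 = Ba f (k + 3) + Aa f (k + 3) * 0
      rw [mul_zero, add_zero]
      rfl
    · show Fa f (k + 3) 0 1 = Ba f (k + 3) + Aa f (k + 3) * 1
      exact (show ∀ u v : ZMod 2, u = v + (u + v) * 1 by decide)
        (Fa f (k + 3) 0 1) (Fa f (k + 3) 0 0)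
  -- the recurrence for the difference valuation
  have hrecur : ∀ (c : Fin 3 → ZMod 2) (k : ℕ), k ≤ 10 →
      Xv f c (k + 3) = Ba f (k + 3) + Aa f (k + 3) * Xv f c (k + 2) + Xv f c k :=
    fun c k hk => (hstep c k).trans (hFform k hk (Xv f c k) (Xv f c (k + 2)))
  have hDrec : ∀ (c : Fin 3 → ZMod 2) (k : ℕ), k ≤ 10 →
      Dv f c (k + 3) = Aa f (k + 3) * Dv f c (k + 2) + Dv f c k := by
    intro c k hk
    show Xv f c (k + 3) + Xv f (fun _ => 0) (k + 3) =
      Aa f (k + 3) * (Xv f c (k + 2) + Xv f (fun _ => 0) (k + 2)) +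
        (Xv f c k + Xv f (fun _ => 0) k)
    rw [hrecur c k hk, hrecur (fun _ => 0) k hk]
    exact (show ∀ b a y z u v : ZMod 2,
      (b + a * y + u) + (b + a * z + v) = a * (y + z) + (u + v) by decide)
      (Ba f (k + 3)) (Aa f (k + 3)) _ _ _ _
  -- now instantiate the key combinatorial lemma
  obtain ⟨c0, c1, c2, hkey⟩ := clock_key (Aa f 3) (Aa f 4) (Aa f 5) (Aa f 6) (Aa f 7)
    (Aa f 8) (Aa f 9) (Aa f 10) (Aa f 11) (Aa f 12) (Aa f 13)
  set c : Fin 3 → ZMod 2 := ![c0, c1, c2] with hcdef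
  have hzout : ∀ i : Fin 3, Xv f (fun _ => (0 : ZMod 2)) (11 + (i : ℕ)) = 0 :=
    fun i => hout (fun _ => 0) i
  have hzin : ∀ i : Fin 3, Xv f (fun _ => (0 : ZMod 2)) (i : ℕ) = 0 :=
    fun i => hXin (fun _ => 0) i
  have hc0 : c 0 = c0 := rfl
  have hc1 : c 1 = c1 := rfl
  have hc2 : c 2 = c2 := rfl
  have d0 : Dv f c 0 = c0 := by
    show Xv f c 0 + Xv f (fun _ => 0) 0 = c0
    have e1 : Xv f c 0 = c 0 := hXin c 0
    have e2 : Xv f (fun _ => (0 : ZMod 2)) 0 = 0 := hzin 0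
    rw [e1, e2, add_zero, hc0]
  have d1 : Dv f c 1 = c1 := by
    show Xv f c 1 + Xv f (fun _ => 0) 1 = c1
    have e1 : Xv f c 1 = c 1 := hXin c 1
    have e2 : Xv f (fun _ => (0 : ZMod 2)) 1 = 0 := hzin 1
    rw [e1, e2, add_zero, hc1]
  have d2 : Dv f c 2 = c2 := by
    show Xv f c 2 + Xv f (fun _ => 0) 2 = c2
    have e1 : Xv f c 2 = c 2 := hXin c 2
    have e2 : Xv f (fun _ => (0 : ZMod 2)) 2 = 0 := hzin 2
    rw [e1, e2, add_zero, hc2]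
  have o0 : Dv f c 11 = c0 := by
    show Xv f c 11 + Xv f (fun _ => 0) 11 = c0
    have e1 : Xv f c 11 = c 0 := hout c 0
    have e2 : Xv f (fun _ => (0 : ZMod 2)) 11 = 0 := hzout 0
    rw [e1, e2, add_zero, hc0]
  have o1 : Dv f c 12 = c1 := by
    show Xv f c 12 + Xv f (fun _ => 0) 12 = c1
    have e1 : Xv f c 12 = c 1 := hout c 1
    have e2 : Xv f (fun _ => (0 : ZMod 2)) 12 = 0 := hzout 1
    rw [e1, e2, add_zero, hc1]
  have o2 : Dv f c 13 = c2 := by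
    show Xv f c 13 + Xv f (fun _ => 0) 13 = c2
    have e1 : Xv f c 13 = c 2 := hout c 2
    have e2 : Xv f (fun _ => (0 : ZMod 2)) 13 = 0 := hzout 2
    rw [e1, e2, add_zero, hc2]

  have E3 : Dv f c 3 = (Aa f 3 * c2 + c0) := by
    have h : Dv f c 3 = Aa f 3 * Dv f c 2 + Dv f c 0 := hDrec c 0 (by norm_num)
    rw [d2, d0] at h; exact h
  have E4 : Dv f c 4 = (Aa f 4 * (Aa f 3 * c2 + c0) + c1) := by
    have h : Dv f c 4 = Aa f 4 * Dv f c 3 + Dv f c 1 := hDrec c 1 (by norm_num)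
    rw [E3, d1] at h; exact h
  have E5 : Dv f c 5 = (Aa f 5 * (Aa f 4 * (Aa f 3 * c2 + c0) + c1) + c2) := by
    have h : Dv f c 5 = Aa f 5 * Dv f c 4 + Dv f c 2 := hDrec c 2 (by norm_num)
    rw [E4, d2] at h; exact h
  have E6 : Dv f c 6 = (Aa f 6 * (Aa f 5 * (Aa f 4 * (Aa f 3 * c2 + c0) + c1) + c2) + (Aa f 3 * c2 + c0)) := by
    have h : Dv f c 6 = Aa f 6 * Dv f c 5 + Dv f c 3 := hDrec c 3 (by norm_num)
    rw [E5, E3] at h; exact h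
  have E7 : Dv f c 7 = (Aa f 7 * (Aa f 6 * (Aa f 5 * (Aa f 4 * (Aa f 3 * c2 + c0) + c1) + c2) + (Aa f 3 * c2 + c0)) + (Aa f 4 * (Aa f 3 * c2 + c0) + c1)) := by
    have h : Dv f c 7 = Aa f 7 * Dv f c 6 + Dv f c 4 := hDrec c 4 (by norm_num)
    rw [E6, E4] at h; exact h
  have E8 : Dv f c 8 = (Aa f 8 * (Aa f 7 * (Aa f 6 * (Aa f 5 * (Aa f 4 * (Aa f 3 * c2 + c0) + c1) + c2) + (Aa f 3 * c2 + c0)) + (Aa f 4 * (Aa f 3 * c2 + c0) + c1)) + (Aa f 5 * (Aa f 4 * (Aa f 3 * c2 + c0) + c1) + c2)) := by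
    have h : Dv f c 8 = Aa f 8 * Dv f c 7 + Dv f c 5 := hDrec c 5 (by norm_num)
    rw [E7, E5] at h; exact h
  have E9 : Dv f c 9 = (Aa f 9 * (Aa f 8 * (Aa f 7 * (Aa f 6 * (Aa f 5 * (Aa f 4 * (Aa f 3 * c2 + c0) + c1) + c2) + (Aa f 3 * c2 + c0)) + (Aa f 4 * (Aa f 3 * c2 + c0) + c1)) + (Aa f 5 * (Aa f 4 * (Aa f 3 * c2 + c0) + c1) + c2)) + (Aa f 6 * (Aa f 5 * (Aa f 4 * (Aa f 3 * c2 + c0) + c1) + c2) + (Aa f 3 * c2 + c0))) := by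
    have h : Dv f c 9 = Aa f 9 * Dv f c 8 + Dv f c 6 := hDrec c 6 (by norm_num)
    rw [E8, E6] at h; exact h
  have E10 : Dv f c 10 = (Aa f 10 * (Aa f 9 * (Aa f 8 * (Aa f 7 * (Aa f 6 * (Aa f 5 * (Aa f 4 * (Aa f 3 * c2 + c0) + c1) + c2) + (Aa f 3 * c2 + c0)) + (Aa f 4 * (Aa f 3 * c2 + c0) + c1)) + (Aa f 5 * (Aa f 4 * (Aa f 3 * c2 + c0) + c1) + c2)) + (Aa f 6 * (Aa f 5 * (Aa f 4 * (Aa f 3 * c2 + c0) + c1) + c2) + (Aa f 3 * c2 + c0))) + (Aa f 7 * (Aa f 6 * (Aa f 5 * (Aa f 4 * (Aa f 3 * c2 + c0) + c1) + c2) + (Aa f 3 * c2 + c0)) + (Aa f 4 * (Aa f 3 * c2 + c0) + c1))) := by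
    have h : Dv f c 10 = Aa f 10 * Dv f c 9 + Dv f c 7 := hDrec c 7 (by norm_num)
    rw [E9, E7] at h; exact h
  have E11 : Dv f c 11 = (Aa f 11 * (Aa f 10 * (Aa f 9 * (Aa f 8 * (Aa f 7 * (Aa f 6 * (Aa f 5 * (Aa f 4 * (Aa f 3 * c2 + c0) + c1) + c2) + (Aa f 3 * c2 + c0)) + (Aa f 4 * (Aa f 3 * c2 + c0) + c1)) + (Aa f 5 * (Aa f 4 * (Aa f 3 * c2 + c0) + c1) + c2)) + (Aa f 6 * (Aa f 5 * (Aa f 4 * (Aa f 3 * c2 + c0) + c1) + c2) + (Aa f 3 * c2 + c0))) + (Aa f 7 * (Aa f 6 * (Aa f 5 * (Aa f 4 * (Aa f 3 * c2 + c0) + c1) + c2) + (Aa f 3 * c2 + c0)) + (Aa f 4 * (Aa f 3 * c2 + c0) + c1))) + (Aa f 8 * (Aa f 7 * (Aa f 6 * (Aa f 5 * (Aa f 4 * (Aa f 3 * c2 + c0) + c1) + c2) + (Aa f 3 * c2 + c0)) + (Aa f 4 * (Aa f 3 * c2 + c0) + c1)) + (Aa f 5 * (Aa f 4 * (Aa f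 3 * c2 + c0) + c1) + c2))) := by
    have h : Dv f c 11 = Aa f 11 * Dv f c 10 + Dv f c 8 := hDrec c 8 (by norm_num)
    rw [E10, E8] at h; exact h
  have E12 : Dv f c 12 = (Aa f 12 * (Aa f 11 * (Aa f 10 * (Aa f 9 * (Aa f 8 * (Aa f 7 * (Aa f 6 * (Aa f 5 * (Aa f 4 * (Aa f 3 * c2 + c0) + c1) + c2) + (Aa f 3 * c2 + c0)) + (Aa f 4 * (Aa f 3 * c2 + c0) + c1)) + (Aa f 5 * (Aa f 4 * (Aa f 3 * c2 + c0) + c1) + c2)) + (Aa f 6 * (Aa f 5 * (Aa f 4 * (Aa f 3 * c2 + c0) + c1) + c2) + (Aa f 3 * c2 + c0))) + (Aa f 7 * (Aa f 6 * (Aa f 5 * (Aa f 4 * (Aa f 3 * c2 + c0) + c1) + c2) + (Aa f 3 * c2 + c0)) + (Aa f 4 * (Aa f 3 * c2 + c0) + c1))) + (Aa f 8 * (Aa f 7 * (Aa f 6 * (Aa f 5 * (Aa f 4 * (Aa f 3 * c2 + c0) + c1) + c2) + (Aa f 3 * c2 + c0)) + (Aa f 4 * (Aa f 3 * c2 + c0)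 + c1)) + (Aa f 5 * (Aa f 4 * (Aa f 3 * c2 + c0) + c1) + c2))) + (Aa f 9 * (Aa f 8 * (Aa f 7 * (Aa f 6 * (Aa f 5 * (Aa f 4 * (Aa f 3 * c2 + c0) + c1) + c2) + (Aa f 3 * c2 + c0)) + (Aa f 4 * (Aa f 3 * c2 + c0) + c1)) + (Aa f 5 * (Aa f 4 * (Aa f 3 * c2 + c0) + c1) + c2)) + (Aa f 6 * (Aa f 5 * (Aa f 4 * (Aa f 3 * c2 + c0) + c1) + c2) + (Aa f 3 * c2 + c0)))) := by
    have h : Dv f c 12 = Aa f 12 * Dv f c 11 + Dv f c 9 := hDrec c 9 (by norm_num)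
    rw [E11, E9] at h; exact h
  have E13 : Dv f c 13 = (Aa f 13 * (Aa f 12 * (Aa f 11 * (Aa f 10 * (Aa f 9 * (Aa f 8 * (Aa f 7 * (Aa f 6 * (Aa f 5 * (Aa f 4 * (Aa f 3 * c2 + c0) + c1) + c2) + (Aa f 3 * c2 + c0)) + (Aa f 4 * (Aa f 3 * c2 + c0) + c1)) + (Aa f 5 * (Aa f 4 * (Aa f 3 * c2 + c0) + c1) + c2)) + (Aa f 6 * (Aa f 5 * (Aa f 4 * (Aa f 3 * c2 + c0) + c1) + c2) + (Aa f 3 * c2 + c0))) + (Aa f 7 * (Aa f 6 * (Aa f 5 * (Aa f 4 * (Aa f 3 * c2 + c0) + c1) + c2) + (Aa f 3 * c2 + c0)) + (Aa f 4 * (Aa f 3 * c2 + c0) + c1))) + (Aa f 8 * (Aa f 7 * (Aa f 6 * (Aa f 5 * (Aa f 4 * (Aa f 3 * c2 + c0) + c1) + c2) + (Aa f 3 * c2 + c0)) + (Aa f 4 * (Aa f 3 * c2 + c0) + c1)) + (Aa f 5 * (Aa f 4 * (Aa f 3 * c2 + c0) + c1) + c2))) + (Aa f 9 * (Aa f 8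 * (Aa f 7 * (Aa f 6 * (Aa f 5 * (Aa f 4 * (Aa f 3 * c2 + c0) + c1) + c2) + (Aa f 3 * c2 + c0)) + (Aa f 4 * (Aa f 3 * c2 + c0) + c1)) + (Aa f 5 * (Aa f 4 * (Aa f 3 * c2 + c0) + c1) + c2)) + (Aa f 6 * (Aa f 5 * (Aa f 4 * (Aa f 3 * c2 + c0) + c1) + c2) + (Aa f 3 * c2 + c0)))) + (Aa f 10 * (Aa f 9 * (Aa f 8 * (Aa f 7 * (Aa f 6 * (Aa f 5 * (Aa f 4 * (Aa f 3 * c2 + c0) + c1) + c2) + (Aa f 3 * c2 + c0)) + (Aa f 4 * (Aa f 3 * c2 + c0) + c1)) + (Aa f 5 * (Aa f 4 * (Aa f 3 * c2 + c0) + c1) + c2)) + (Aa f 6 * (Aa f 5 * (Aa f 4 * (Aa f 3 * c2 + c0) + c1) + c2) + (Aa f 3 * c2 + c0))) + (Aa f 7 * (Aa f 6 * (Aa f 5 * (Aa f 4 * (Aa f 3 * c2 + c0) + c1) + c2) + (Aa f 3 * c2 + c0)) + (Aa f 4 * (Aa f 3 * c2 + c0) + c1)))) := by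
    have h : Dv f c 13 = Aa f 13 * Dv f c 12 + Dv f c 10 := hDrec c 10 (by norm_num)
    rw [E12, E10] at h; exact h
  exact hkey ⟨E11.symm.trans o0, E12.symm.trans o1, E13.symm.trans o2⟩
end

section
/- For every integer r ≥ 3 and every integer s ≥ 2, setting n = r²−r−1, the clock network N_n({1,r}) is not s-solvable. -/
theorem sub_mem_closure_of_forward_step {S : Set ℕ} {D : ℕ → Prop} {n r : ℕ}
    (hS : ∀ d ∈ S, 0 < d ∧ d ≤ r) (hout : ∀ m, n ≤ m → m < n + r → D m → m = n)
    (hfwd : ∀ m < n, D m → ∃ d ∈ S, D (m + d)) {m : ℕ} (hm : m ≤ n) (hD : D m) :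
    n - m ∈ AddSubmonoid.closure S := by
  induction h : n - m using Nat.strong_induction_on generalizing m with
  | _ t ih =>
    subst h
    rcases hm.eq_or_lt with rfl | hlt
    · simp
    obtain ⟨d, hdS, hDd⟩ := hfwd m hlt hD
    obtain ⟨hd0, hdr⟩ := hS d hdS
    have hle : m + d ≤ n := by
      by_contra! hgt
      exact hgt.ne' (hout (m + d) hgt.le (by omega) hDd)
    rw [show n - m = n - (m + d) + d by omega]
    exact add_mem (ih _ (by omega) hle hDd rfl) (AddSubmonoid.subset_closure hdS)

theorem mul_add_one_notMem_closure {r k : ℕ} (hk : k + 3 ≤ r) :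
    k * r + 1 ∉ AddSubmonoid.closure ({r - 1, r} : Set ℕ) := by
  rw [AddSubmonoid.mem_closure_pair]
  rintro ⟨a, b, h⟩
  obtain ⟨p, rfl⟩ : ∃ p, r = p + 1 := ⟨r - 1, by omega⟩
  simp only [smul_eq_mul, Nat.add_sub_cancel] at h
  -- `a p + b (p + 1) = (a + b) (p + 1) - a` is too small if `a + b ≤ k`;
  -- otherwise `a ≥ p`, and it is too large
  rcases le_or_gt (a + b) k with hab | hab <;> nlinarith

theorem not_at_output_of_propagation {r n : ℕ} {D : ℕ → Prop} (hr : 3 ≤ r)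
    (hn : n = r ^ 2 - r - 1) (hin : ∀ m < r, D m → m = 0)
    (hout : ∀ m, n ≤ m → m < n + r → D m → m = n)
    (hfwd : ∀ m < n, D m → D (m + r) ∨ D (m + r - 1))
    (hbwd : ∀ m, r ≤ m → D m → D (m - 1) ∨ D (m - r)) : ¬ D n := by
  intro hDn
  replace hn : n = (r - 2) * r + (r - 1) := by
    obtain ⟨p, rfl⟩ : ∃ p, r = p + 2 := ⟨r - 2, by omega⟩
    rw [hn, Nat.add_sub_cancel]
    ring_nf
    omega
  have reach (m : ℕ) (hm : m ≤ n) (hD : D m) :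
      n - m ∈ AddSubmonoid.closure ({r - 1, r} : Set ℕ) := by
    refine sub_mem_closure_of_forward_step ?_ hout (fun m hm hD ↦ ?_) hm hD
    · simp only [Set.mem_insert_iff, Set.mem_singleton_iff, forall_eq_or_imp, forall_eq]
      omega
    · rcases hfwd m hm hD with h | h
      · exact ⟨r, by simp, h⟩
      · exact ⟨r - 1, by simp, by rwa [← Nat.add_sub_assoc (by omega)]⟩
  have descend (q : ℕ) (hq : q + 2 ≤ r) : D (n - q * r) := by
    induction q with
    | zero => simpa using hDn
    | succ q ih =>
      have hqr : (q + 1) * r ≤ (r - 2) * r := Nat.mul_le_mul_right r (by omega)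
      rw [add_mul, one_mul] at hqr ⊢
      rcases hbwd _ (by omega) (ih (by omega)) with h | h
      · refine absurd (reach _ (by omega) h) ?_
        rw [show n - (n - q * r - 1) = q * r + 1 by omega]
        exact mul_add_one_notMem_closure (by omega)
      · rwa [← Nat.sub_sub]
  have := hin _ (by omega) (descend (r - 2) (by omega))
  omega

namespace ClockNetwork

variable {R : Finset ℕ} {r n s : ℕ} (f : ℕ → ({ j // j ∈ R } → ZMod s) → ZMod s)

/-- The guard `0 < j ≤ k` only makes the recursion well founded: it always holds
when `R ⊆ [1, r]` and `k ≥ r`. -/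
def valuation (c : Fin r → ZMod s) : ℕ → ZMod s
  | k =>
    if h : k < r then c ⟨k, h⟩
    else f k fun j => if _hj : 0 < (j : ℕ) ∧ (j : ℕ) ≤ k then valuation c (k - j) else 0
  decreasing_by omega

theorem valuation_of_lt (c : Fin r → ZMod s) {k : ℕ} (hk : k < r) :
    valuation f c k = c ⟨k, hk⟩ := by
  rw [valuation, dif_pos hk]

theorem valuation_of_le (hR : R ⊆ Finset.Icc 1 r) (c : Fin r → ZMod s) {k : ℕ}
    (hk : r ≤ k) :
    valuation f c k = f k fun j => valuation f c (k - j) := by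
  rw [valuation, dif_neg (by omega)]
  congr! with j
  have := Finset.mem_Icc.mp (hR j.2)
  rw [dif_pos (by omega)]

theorem _root_.Solvable.exists_valuation_add_eq (h : Solvable R r n s)
    (hR : R ⊆ Finset.Icc 1 r) :
    ∃ f : ℕ → ({ j // j ∈ R } → ZMod s) → ZMod s,
      ∀ (c : Fin r → ZMod s) (i : Fin r), valuation f c (n + i) = c i := by
  obtain ⟨f, hf⟩ := h
  exact ⟨f, fun c ↦ hf c _ (fun i ↦ valuation_of_lt f c i.2)
    fun k hk _ ↦ valuation_of_le f hR c hk⟩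

theorem valuation_eq_of_window_eq (hR : R ⊆ Finset.Icc 1 r) {c c' : Fin r → ZMod s} {m : ℕ}
    (hw : ∀ i : Fin r, valuation f c (m + i) = valuation f c' (m + i)) {k : ℕ} (hk : m ≤ k) :
    valuation f c k = valuation f c' k := by
  induction k using Nat.strong_induction_on with
  | _ k ih =>
    by_cases hlt : k < m + r
    · simpa [Nat.add_sub_cancel' hk] using hw ⟨k - m, by omega⟩
    rw [valuation_of_le f hR c (by omega), valuation_of_le f hR c' (by omega)]
    congr 1
    funext j
    have := Finset.mem_Icc.mp (hR j.2)
    exact ih _ (by omega) (by omega)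

theorem exists_valuation_sub_ne (hR : R ⊆ Finset.Icc 1 r) {c c' : Fin r → ZMod s} {m : ℕ}
    (hm : r ≤ m) (h : valuation f c m ≠ valuation f c' m) :
    ∃ j ∈ R, valuation f c (m - j) ≠ valuation f c' (m - j) := by
  contrapose! h
  rw [valuation_of_le f hR c hm, valuation_of_le f hR c' hm]
  exact congrArg _ (funext fun j ↦ h j j.2)

def window (c : Fin r → ZMod s) (m : ℕ) : Fin r → ZMod s := fun i => valuation f c (m + i)

/-- Placed at `m`, this window makes the gate at node `m + r` read `g j` from
node `m + r - j`. -/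
def gateWindow (g : { j // j ∈ R } → ZMod s) : Fin r → ZMod s :=
  fun i => if h : r - i ∈ R then g ⟨r - i, h⟩ else 0

section Window

variable (hR : R ⊆ Finset.Icc 1 r)
include hR

theorem valuation_add_sub_eq_of_window_eq {c : Fin r → ZMod s} {m : ℕ}
    {g : { j // j ∈ R } → ZMod s} (hc : window f c m = gateWindow g) (j : { j // j ∈ R }) :
    valuation f c (m + r - j) = g j := by
  have hj := Finset.mem_Icc.mp (hR j.2)
  have hrj : r - (r - j) = j := Nat.sub_sub_self hj.2
  rw [show m + r - j = m + (r - j) by omega]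
  refine (congrFun hc ⟨r - j, by omega⟩).trans ?_
  simp only [gateWindow, hrj, j.2, dite_true]

theorem valuation_add_eq_of_window_eq {c : Fin r → ZMod s} {m : ℕ}
    {g : { j // j ∈ R } → ZMod s} (hc : window f c m = gateWindow g) :
    valuation f c (m + r) = f (m + r) g := by
  rw [valuation_of_le f hR c (Nat.le_add_left r m)]
  exact congrArg _ (funext (valuation_add_sub_eq_of_window_eq f hR hc))

variable (hf : ∀ (c : Fin r → ZMod s) (i : Fin r), valuation f c (n + i) = c i)
include hf

theorem window_injective {m : ℕ} (hm : m ≤ n) :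
    Function.Injective fun c : Fin r → ZMod s => window f c m := by
  intro c c' h
  funext i
  rw [← hf c i, ← hf c' i]
  exact valuation_eq_of_window_eq f hR (congrFun h) (by omega)

theorem window_surjective [NeZero s] {m : ℕ} (hm : m ≤ n) :
    Function.Surjective fun c : Fin r → ZMod s => window f c m :=
  Finite.surjective_of_injective (window_injective f hR hf hm)

theorem gate_injective [NeZero s] (hrR : r ∈ R) {m : ℕ} (hm : m < n)
    {g g' : { j // j ∈ R } → ZMod s}
    (hgg : ∀ j : { j // j ∈ R }, (j : ℕ) ≠ r → g j = g' j)
    (h : f (m + r) g = f (m + r) g') : g ⟨r, hrR⟩ = g' ⟨r, hrR⟩ := by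
  obtain ⟨c, hc⟩ := window_surjective f hR hf hm.le (gateWindow g)
  obtain ⟨c', hc'⟩ := window_surjective f hR hf hm.le (gateWindow g')
  have hcc' : c = c' := by
    refine window_injective f hR hf (m := m + 1) hm (funext fun i ↦ ?_)
    by_cases hi : (i : ℕ) + 1 < r
    · have e := congrFun hc ⟨i + 1, hi⟩
      have e' := congrFun hc' ⟨i + 1, hi⟩
      simp only [window] at e e' ⊢
      rw [add_right_comm, add_assoc, e, e', gateWindow, gateWindow]
      split_ifs
      · exact hgg _ (show r - (i + 1) ≠ r by omega)
      · rfl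
    · simp only [window]
      rw [show m + 1 + i = m + r by omega, valuation_add_eq_of_window_eq f hR hc,
        valuation_add_eq_of_window_eq f hR hc', h]
  rw [← valuation_add_sub_eq_of_window_eq f hR hc ⟨r, hrR⟩,
    ← valuation_add_sub_eq_of_window_eq f hR hc' ⟨r, hrR⟩, hcc']

theorem valuation_add_ne_or_exists_valuation_add_sub_ne [NeZero s] (hrR : r ∈ R)
    {c c' : Fin r → ZMod s} {m : ℕ} (hm : m < n) (h : valuation f c m ≠ valuation f c' m) :
    valuation f c (m + r) ≠ valuation f c' (m + r) ∨
      ∃ j ∈ R, j ≠ r ∧ valuation f c (m + r - j) ≠ valuation f c' (m + r - j) := by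
  by_contra! ⟨hmr, hj⟩
  have hle := Nat.le_add_left r m
  rw [valuation_of_le f hR c hle, valuation_of_le f hR c' hle] at hmr
  exact h (by simpa using gate_injective f hR hf hrR hm (fun j hjr ↦ hj j j.2 hjr) hmr)

end Window

end ClockNetwork

open ClockNetwork in
/-- For every `r ≥ 3` and `s ≥ 2`, with `n = r² - r - 1`, the clock network
`N_n({1,r})` is not `s`-solvable. -/
theorem clock1r_not_solvable (r s : ℕ) (hr : 3 ≤ r) (hs : 2 ≤ s) :
    ¬ Solvable {1, r} r (r ^ 2 - r - 1) s := by
  intro h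
  have hR : ({1, r} : Finset ℕ) ⊆ Finset.Icc 1 r := by
    intro j
    simp only [Finset.mem_insert, Finset.mem_singleton, Finset.mem_Icc]
    omega
  obtain ⟨f, hf⟩ := h.exists_valuation_add_eq hR
  have : NeZero r := ⟨by omega⟩
  have : Fact (1 < s) := ⟨by omega⟩
  set e : Fin r → ZMod s := Pi.single 0 1
  have he (i : Fin r) : e i ≠ (0 : Fin r → ZMod s) i ↔ (i : ℕ) = 0 := by
    simp [e, Pi.single_apply]
  refine not_at_output_of_propagation
    (D := fun m ↦ valuation f e m ≠ valuation f (0 : Fin r → ZMod s) m) hr rfl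
    (fun m hm hD ↦ ?_) (fun m h₁ h₂ hD ↦ ?_) (fun m hm hD ↦ ?_) (fun m hm hD ↦ ?_) ?_
  · rwa [valuation_of_lt f _ hm, valuation_of_lt f _ hm, he] at hD
  · obtain ⟨i, rfl⟩ : ∃ i : Fin r, r ^ 2 - r - 1 + i = m :=
      ⟨⟨m - (r ^ 2 - r - 1), by omega⟩, by simp only; omega⟩
    rw [hf, hf, he] at hD
    omega
  · simpa [show 1 ≠ r by omega] using
      valuation_add_ne_or_exists_valuation_add_sub_ne f hR hf (by simp) hm hD
  · simpa using exists_valuation_sub_ne f hR hm hD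
  · simpa using (hf e 0).trans_ne (((he 0).2 rfl).trans_eq (hf 0 0).symm)
end
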